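/- arXiv:2506.08127 — 12 statements merged into one kernel-verified Lean document; each statement's English description precedes it below -/
import Mathlib

section
/- Let O ⊆ [K] be any subset. Define Alt(O) := {λ ∈ (ℝ^d)^K : O*(λ) ≠ O}, Alt⁻(O) := (⋃_{i∈O} {λ ∈ (ℝ^d)^K : λ_i ∉ P}) ∪ (⋃_{i,j∈O, i≠j} {λ ∈ (ℝ^d)^K : λ_i ≺ λ_j}), and Alt⁺(O) := ⋃_{i∈[K]∖O} {λ ∈ (ℝ^d)^K : λ_i ∈ P and ∀ j ∈ O, ¬(λ_i ≺ λ_j)}. Then Alt(O) = Alt⁻(O) ∪ Alt⁺(O). -/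
noncomputable section
open scoped Classical
open Metric Set

abbrev Evec (d : ℕ) := EuclideanSpace ℝ (Fin d)

def Pdom {d : ℕ} (x y : Evec d) : Prop := (∀ c, x c ≤ y c) ∧ x ≠ y

def PolySet {d m : ℕ} (A : Fin m → Fin d → ℝ) (bvec : Fin m → ℝ) : Set (Evec d) :=
  {x | ∀ j, ∑ c, A j c * x c ≤ bvec j}

def OptSet {K d : ℕ} (P : Set (Evec d)) (μ : Fin K → Evec d) : Set (Fin K) :=
  {i | μ i ∈ P ∧ ∀ j, μ j ∈ P → ¬ Pdom (μ i) (μ j)}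

/-!
Domination is the strict coordinatewise order, so among the finitely many feasible arms every
feasible arm that is dominated is dominated by a maximal one, i.e. by an arm of `O*(λ)`. Hence
`O*(λ) = O` exactly when every arm of `O` is feasible, no arm of `O` dominates another, and every
feasible arm outside `O` is dominated by an arm of `O`; `Alt(O)` is the union of the failures of
these three conditions.
-/

lemma pdom_iff_ofLp_lt {d : ℕ} {x y : Evec d} : Pdom x y ↔ x.ofLp < y.ofLp := by
  rw [Pdom, lt_iff_le_and_ne, Pi.le_def]
  exact and_congr Iff.rfl (WithLp.ofLp_injective 2).ne_iff.symm

lemma exists_mem_optSet_pdom_of_notMem {K d : ℕ} {P : Set (Evec d)} {lam : Fin K → Evec d}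
    {i : Fin K} (hi : lam i ∈ P) (hiO : i ∉ OptSet P lam) :
    ∃ j ∈ OptSet P lam, Pdom (lam i) (lam j) := by
  obtain ⟨j, hj, hij⟩ : ∃ j, lam j ∈ P ∧ Pdom (lam i) (lam j) := by
    simpa [OptSet, hi] using hiO
  have hfin : ((fun k => (lam k).ofLp) '' {k | lam k ∈ P}).Finite := Set.toFinite _
  obtain ⟨_, hjb, ⟨j', hj', rfl⟩, hmax⟩ := hfin.exists_le_maximal ⟨j, hj, rfl⟩
  refine ⟨j', ⟨hj', fun k hk hjk => ?_⟩, ?_⟩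
  · rw [pdom_iff_ofLp_lt] at hjk
    exact hjk.not_ge (hmax ⟨k, hk, rfl⟩ hjk.le)
  · rw [pdom_iff_ofLp_lt] at hij ⊢
    exact hij.trans_le hjb

lemma optSet_eq_iff {K d : ℕ} {P : Set (Evec d)} {lam : Fin K → Evec d} {O : Set (Fin K)} :
    OptSet P lam = O ↔ (∀ i ∈ O, lam i ∈ P) ∧ (∀ i ∈ O, ∀ j ∈ O, i ≠ j → ¬ Pdom (lam i) (lam j)) ∧
      ∀ i ∉ O, lam i ∈ P → ∃ j ∈ O, Pdom (lam i) (lam j) := by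
  constructor
  · rintro rfl
    refine ⟨fun i hi => hi.1, fun i hi j hj _ => hi.2 j hj.1, fun i hiO hi => ?_⟩
    exact exists_mem_optSet_pdom_of_notMem hi hiO
  · rintro ⟨hfeas, hinner, hcover⟩
    ext i
    constructor
    · intro hi
      by_contra hiO
      obtain ⟨j, hjO, hij⟩ := hcover i hiO hi.1
      exact hi.2 j (hfeas j hjO) hij
    · intro hiO
      by_contra hi
      obtain ⟨j, hj, hij⟩ := exists_mem_optSet_pdom_of_notMem (hfeas i hiO) hi
      by_cases hjO : j ∈ O
      · exact hinner i hiO j hjO (fun h => hij.2 (congrArg lam h)) hij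
      · obtain ⟨k, hkO, hjk⟩ := hcover j hjO hj.1
        exact hj.2 k (hfeas k hkO) hjk

theorem stmt0_general {K d m : ℕ}
    (A : Fin m → Fin d → ℝ) (bvec : Fin m → ℝ) (O : Set (Fin K)) :
    {lam : Fin K → Evec d | OptSet (PolySet A bvec) lam ≠ O} =
      ((⋃ i ∈ O, {lam : Fin K → Evec d | lam i ∉ PolySet A bvec}) ∪
        ⋃ i ∈ O, ⋃ j ∈ O, ⋃ (_ : i ≠ j), {lam : Fin K → Evec d | Pdom (lam i) (lam j)}) ∪
      ⋃ i ∈ Oᶜ, {lam : Fin K → Evec d |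
        lam i ∈ PolySet A bvec ∧ ∀ j ∈ O, ¬ Pdom (lam i) (lam j)} := by
  ext lam
  simp only [mem_ofPred_eq, ne_eq, optSet_eq_iff, not_and_or, mem_union, mem_iUnion,
    mem_compl_iff, exists_prop]
  push Not
  rw [or_assoc]

/-- `Alt(O) = Alt⁻(O) ∪ Alt⁺(O)`. -/
theorem stmt0 {K d m : ℕ} (hK : 0 < K) (hd : 0 < d) (hm : 0 < m)
    (A : Fin m → Fin d → ℝ) (bvec : Fin m → ℝ) (O : Set (Fin K)) :
    {lam : Fin K → Evec d | OptSet (PolySet A bvec) lam ≠ O} =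
      ((⋃ i ∈ O, {lam : Fin K → Evec d | lam i ∉ PolySet A bvec}) ∪
        ⋃ i ∈ O, ⋃ j ∈ O, ⋃ (_ : i ≠ j), {lam : Fin K → Evec d | Pdom (lam i) (lam j)}) ∪
      ⋃ i ∈ Oᶜ, {lam : Fin K → Evec d |
        lam i ∈ PolySet A bvec ∧ ∀ j ∈ O, ¬ Pdom (lam i) (lam j)} :=
  stmt0_general A bvec O
end
end

section
/- Let O ⊆ [K] be nonempty, let w ∈ ℝ^K have strictly positive entries, let μ ∈ (ℝ^d)^K, and assume P ≠ ℝ^d (so that ℝ^d∖P is nonempty). Define the transport cost D_w(λ) := Σ_{k∈[K]} (1/2) w_k ‖μ_k − λ_k‖₂² and the set Alt⁻_w(O) := (⋃_{i∈O} {λ ∈ (ℝ^d)^K : λ_i ∉ P}) ∪ (⋃_{i,j∈O, i≠j} {λ ∈ (ℝ^d)^K : λ_i^c ≤ λ_j^c for all c ∈ [d]}). Then inf_{λ ∈ Alt⁻_w(O)} D_w(λ) = (1/2) min(φ₁, φ₂), where φ₁ := min_{i∈O} w_i · infDist(μ_i, ℝ^d∖P)² and φ₂ := min_{i,j∈O,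 i≠j} (w_i w_j/(w_i+w_j)) Σ_{c∈[d]} (max(μ_i^c − μ_j^c, 0))², with the convention that the minimum over an empty index set (for φ₂ when |O| = 1) equals +∞. -/
noncomputable section

private lemma coord_ineq (w1 w2 a b x y : ℝ) (h1 : 0 < w1) (h2 : 0 < w2) (hxy : x ≤ y) :
    w1*w2/(w1+w2) * (max (a-b) 0)^2 ≤ w1*(a-x)^2 + w2*(b-y)^2 := by
  have hs : 0 < w1 + w2 := by linarith
  rw [div_mul_eq_mul_div, div_le_iff₀ hs]
  rcases le_or_gt a b with hab | hab
  · rw [max_eq_right (by linarith)]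
    have h0 : (0:ℝ) ≤ (w1*(a-x)^2 + w2*(b-y)^2)*(w1+w2) := by positivity
    nlinarith [h0]
  · rw [max_eq_left (by linarith)]
    have huv : a - b ≤ (a-x) + (y-b) := by linarith
    have h2' : (a-b)^2 ≤ ((a-x)+(y-b))^2 := by nlinarith
    nlinarith [sq_nonneg (w1*(a-x) - w2*(y-b)), mul_pos h1 h2]

private lemma coord_eq (w1 w2 a b : ℝ) (h1 : 0 < w1) (h2 : 0 < w2) :
    w1*(a - (w1*a+w2*b)/(w1+w2))^2 + w2*(b - (w1*a+w2*b)/(w1+w2))^2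
      = w1*w2/(w1+w2)*(a-b)^2 := by
  have hs : w1 + w2 ≠ 0 := by positivity
  field_simp
  ring

private lemma ereal_le_coe_of_forall_pos {x : EReal} {t : ℝ}
    (h : ∀ ε : ℝ, 0 < ε → x ≤ ((t + ε : ℝ) : EReal)) : x ≤ (t : EReal) := by
  by_contra hc
  push_neg at hc
  obtain ⟨u, hu1, hu2⟩ := EReal.lt_iff_exists_real_btwn.mp hc
  have ht : t < u := by exact_mod_cast hu1
  have := h (u - t) (by linarith)
  rw [show t + (u - t) = u by ring] at this
  exact absurd (lt_of_le_of_lt this hu2) (lt_irrefl _)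

private lemma norm_sq_evec {d : ℕ} (v : Evec d) : ‖v‖^2 = ∑ c, (v c)^2 := by
  rw [EuclideanSpace.norm_eq, Real.sq_sqrt (by positivity)]
  simp [sq_abs]

set_option maxHeartbeats 2000000 in
/-- the value of the transportation cost to the alternative set
`Alt⁻_w(O)` equals `(1/2)·min(φ₁, φ₂)`, where the minima over empty index sets are `+∞`
(hence the statement is phrased in `EReal`). -/
theorem stmt1 {K d m : ℕ} (hK : 0 < K) (hd : 0 < d) (hm : 0 < m)
    (A : Fin m → Fin d → ℝ) (bvec : Fin m → ℝ)
    (O : Finset (Fin K)) (hO : O.Nonempty)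
    (w : Fin K → ℝ) (hw : ∀ i, 0 < w i)
    (μ : Fin K → Evec d)
    (hP : PolySet A bvec ≠ Set.univ) :
    (⨅ lam ∈ {lam : Fin K → Evec d | (∃ i ∈ O, lam i ∉ PolySet A bvec) ∨
        ∃ i ∈ O, ∃ j ∈ O, i ≠ j ∧ ∀ c, lam i c ≤ lam j c},
      ((∑ k, (1/2 : ℝ) * w k * ‖μ k - lam k‖^2 : ℝ) : EReal)) =
    (1/2 : EReal) * min
      (⨅ i ∈ O, ((w i * (Metric.infDist (μ i) (PolySet A bvec)ᶜ)^2 : ℝ) : EReal))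
      (⨅ i ∈ O, ⨅ j ∈ O, ⨅ (_ : i ≠ j),
        ((w i * w j / (w i + w j) * ∑ c, (max (μ i c - μ j c) 0)^2 : ℝ) : EReal)) := by
  classical
  have hPc : ((PolySet A bvec)ᶜ).Nonempty := Set.nonempty_compl.mpr hP
  -- splitting a pair of norms into a coordinatewise sum
  have hsplit : ∀ (i j : Fin K) (u v : Evec d),
      (1/2:ℝ)*w i*‖u‖^2 + (1/2:ℝ)*w j*‖v‖^2
        = ∑ c, ((1/2:ℝ)*w i*(u c)^2 + (1/2:ℝ)*w j*(v c)^2) := by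
    intro i j u v
    rw [norm_sq_evec, norm_sq_evec, Finset.mul_sum, Finset.mul_sum,
      ← Finset.sum_add_distrib]
  have hLdist : ∀ (q : ℝ) (g : Fin d → ℝ),
      (1/2:ℝ) * (q * ∑ c, g c) = ∑ c, (1/2:ℝ) * (q * g c) := by
    intro q g
    rw [Finset.mul_sum, Finset.mul_sum]
  -- lower bound from the first alternative
  have hFlower1 : ∀ (lam : Fin K → Evec d) (i : Fin K), i ∈ O → lam i ∉ PolySet A bvec →
      1/2 * (w i * (Metric.infDist (μ i) (PolySet A bvec)ᶜ)^2)
        ≤ ∑ k, (1/2:ℝ) * w k * ‖μ k - lam k‖^2 := by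
    intro lam i hi hip
    have hd1 : Metric.infDist (μ i) (PolySet A bvec)ᶜ ≤ ‖μ i - lam i‖ := by
      rw [← dist_eq_norm]
      exact Metric.infDist_le_dist_of_mem hip
    have hd0 : (0:ℝ) ≤ Metric.infDist (μ i) (PolySet A bvec)ᶜ := Metric.infDist_nonneg
    have hsq : (Metric.infDist (μ i) (PolySet A bvec)ᶜ)^2 ≤ ‖μ i - lam i‖^2 :=
      pow_le_pow_left₀ hd0 hd1 2
    have hsingle : (1/2:ℝ)*w i*‖μ i - lam i‖^2 ≤ ∑ k, (1/2:ℝ)*w k*‖μ k - lam k‖^2 :=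
      Finset.single_le_sum (f := fun k => (1/2:ℝ)*w k*‖μ k - lam k‖^2)
        (fun k _ => mul_nonneg (mul_nonneg (by norm_num) (hw k).le)
          (pow_nonneg (norm_nonneg _) 2)) (Finset.mem_univ i)
    nlinarith [hw i]
  -- lower bound from the second alternative
  have hFlower2 : ∀ (lam : Fin K → Evec d) (i j : Fin K), i ∈ O → j ∈ O → i ≠ j →
      (∀ c, lam i c ≤ lam j c) →
      1/2 * (w i * w j / (w i + w j) * ∑ c, (max (μ i c - μ j c) 0)^2)
        ≤ ∑ k, (1/2:ℝ) * w k * ‖μ k - lam k‖^2 := by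
    intro lam i j hi hj hij hcle
    have hpair : ∑ k ∈ ({i,j} : Finset (Fin K)), (1/2:ℝ)*w k*‖μ k - lam k‖^2
        ≤ ∑ k, (1/2:ℝ)*w k*‖μ k - lam k‖^2 :=
      Finset.sum_le_sum_of_subset_of_nonneg (Finset.subset_univ _)
        (fun k _ _ => mul_nonneg (mul_nonneg (by norm_num) (hw k).le)
          (pow_nonneg (norm_nonneg _) 2))
    rw [Finset.sum_pair hij] at hpair
    refine le_trans ?_ hpair
    rw [hsplit i j (μ i - lam i) (μ j - lam j), hLdist]
    refine Finset.sum_le_sum fun c _ => ?_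
    have h := coord_ineq (w i) (w j) (μ i c) (μ j c) (lam i c) (lam j c)
      (hw i) (hw j) (hcle c)
    simp only [PiLp.sub_apply]
    nlinarith [h]
  -- upper bound via the first alternative
  have hub1 : ∀ i ∈ O,
      (⨅ lam ∈ {lam : Fin K → Evec d | (∃ i ∈ O, lam i ∉ PolySet A bvec) ∨
          ∃ i ∈ O, ∃ j ∈ O, i ≠ j ∧ ∀ c, lam i c ≤ lam j c},
        ((∑ k, (1/2 : ℝ) * w k * ‖μ k - lam k‖^2 : ℝ) : EReal))
      ≤ ((1/2 * (w i * (Metric.infDist (μ i) (PolySet A bvec)ᶜ)^2) : ℝ) : EReal) := by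
    intro i hi
    apply ereal_le_coe_of_forall_pos
    intro ε hε
    set D := Metric.infDist (μ i) (PolySet A bvec)ᶜ with hD
    have hD0 : (0:ℝ) ≤ D := Metric.infDist_nonneg
    have hwi := hw i
    set δ : ℝ := min 1 (2*ε/(w i*(2*D+1))) with hδ
    have hδ0 : 0 < δ := lt_min one_pos (div_pos (by linarith) (mul_pos hwi (by linarith)))
    obtain ⟨x, hxmem, hxd⟩ := (Metric.infDist_lt_iff hPc).mp
      (show Metric.infDist (μ i) (PolySet A bvec)ᶜ < D + δ by rw [← hD]; linarith)
    have hmem : Function.update μ i x ∈ {lam : Fin K → Evec d |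
        (∃ i ∈ O, lam i ∉ PolySet A bvec) ∨
        ∃ i ∈ O, ∃ j ∈ O, i ≠ j ∧ ∀ c, lam i c ≤ lam j c} :=
      Or.inl ⟨i, hi, by simpa [Function.update_self] using hxmem⟩
    refine le_trans (iInf₂_le (Function.update μ i x) hmem) ?_
    rw [EReal.coe_le_coe_iff]
    have hsum : (∑ k, (1/2:ℝ)*w k*‖μ k - Function.update μ i x k‖^2)
        = (1/2:ℝ)*w i*‖μ i - x‖^2 := by
      rw [Finset.sum_eq_single_of_mem i (Finset.mem_univ i)
        (fun k _ hk => by simp [Function.update_of_ne hk])]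
      rw [Function.update_self]
    rw [hsum]
    have hdist : ‖μ i - x‖ < D + δ := by
      rw [← dist_eq_norm]; exact hxd
    have hnsq : ‖μ i - x‖^2 ≤ (D + δ)^2 :=
      pow_le_pow_left₀ (norm_nonneg _) hdist.le 2
    have hδ1 : δ ≤ 1 := min_le_left _ _
    have hδ2 : δ ≤ 2*ε/(w i*(2*D+1)) := min_le_right _ _
    have hδ2' : δ * (w i*(2*D+1)) ≤ 2*ε := by
      rw [le_div_iff₀ (mul_pos hwi (by linarith))] at hδ2
      linarith
    nlinarith [mul_le_mul_of_nonneg_left hnsq (by linarith : (0:ℝ) ≤ (1/2)*w i),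
      mul_nonneg hwi.le hδ0.le]
  -- upper bound via the second alternative (exact witness)
  have hub2 : ∀ i ∈ O, ∀ j ∈ O, i ≠ j →
      (⨅ lam ∈ {lam : Fin K → Evec d | (∃ i ∈ O, lam i ∉ PolySet A bvec) ∨
          ∃ i ∈ O, ∃ j ∈ O, i ≠ j ∧ ∀ c, lam i c ≤ lam j c},
        ((∑ k, (1/2 : ℝ) * w k * ‖μ k - lam k‖^2 : ℝ) : EReal))
      ≤ ((1/2 * (w i * w j / (w i + w j) * ∑ c, (max (μ i c - μ j c) 0)^2) : ℝ) : EReal) := by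
    intro i hi j hj hij
    set z : Fin d → ℝ := fun c => (w i * μ i c + w j * μ j c)/(w i + w j) with hz
    set xv : Evec d := (WithLp.equiv 2 (Fin d → ℝ)).symm
      (fun c => if μ i c ≤ μ j c then μ i c else z c) with hxv
    set yv : Evec d := (WithLp.equiv 2 (Fin d → ℝ)).symm
      (fun c => if μ i c ≤ μ j c then μ j c else z c) with hyv
    have hxc : ∀ c, xv c = if μ i c ≤ μ j c then μ i c else z c := fun c => rfl
    have hyc : ∀ c, yv c = if μ i c ≤ μ j c then μ j c else z c := fun c => rfl
    set lam : Fin K → Evec d := fun k => if k = i then xv else if k = j then yv else μ k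
      with hlam
    have hlami : lam i = xv := by rw [hlam]; simp
    have hlamj : lam j = yv := by rw [hlam]; simp [hij.symm]
    have hmem : lam ∈ {lam : Fin K → Evec d |
        (∃ i ∈ O, lam i ∉ PolySet A bvec) ∨
        ∃ i ∈ O, ∃ j ∈ O, i ≠ j ∧ ∀ c, lam i c ≤ lam j c} := by
      refine Or.inr ⟨i, hi, j, hj, hij, fun c => ?_⟩
      rw [hlami, hlamj, hxc, hyc]
      rcases le_or_gt (μ i c) (μ j c) with h | h
      · rw [if_pos h, if_pos h]; exact h
      · rw [if_neg (not_le.mpr h), if_neg (not_le.mpr h)]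
    have hF2 : (∑ k, (1/2:ℝ)*w k*‖μ k - lam k‖^2)
        = 1/2 * (w i * w j / (w i + w j) * ∑ c, (max (μ i c - μ j c) 0)^2) := by
      have hoff : ∀ k ∈ (Finset.univ : Finset (Fin K)), k ∉ ({i,j} : Finset (Fin K)) →
          (1/2:ℝ)*w k*‖μ k - lam k‖^2 = 0 := by
        intro k _ hk
        simp only [Finset.mem_insert, Finset.mem_singleton] at hk
        push_neg at hk
        have hlk : lam k = μ k := by rw [hlam]; simp [hk.1, hk.2]
        rw [hlk]; simp
      rw [← Finset.sum_subset (Finset.subset_univ ({i,j} : Finset (Fin K))) hoff]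
      rw [Finset.sum_pair hij, hlami, hlamj,
        hsplit i j (μ i - xv) (μ j - yv), hLdist]
      refine Finset.sum_congr rfl fun c _ => ?_
      simp only [PiLp.sub_apply]
      rw [hxc, hyc]
      rcases le_or_gt (μ i c) (μ j c) with h | h
      · rw [if_pos h, if_pos h, max_eq_right (by linarith)]
        ring
      · rw [if_neg (not_le.mpr h), if_neg (not_le.mpr h), max_eq_left (by linarith),
          hz]
        have hce := coord_eq (w i) (w j) (μ i c) (μ j c) (hw i) (hw j)
        linarith
    refine le_trans (iInf₂_le lam hmem) (le_of_eq ?_)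
    rw [hF2]
  -- case split on whether O contains two distinct elements
  by_cases hcase : ∀ i ∈ O, ∀ j ∈ O, i = j
  · -- O is a singleton
    obtain ⟨i0, hi0⟩ := hO
    have h2top : (⨅ i ∈ O, ⨅ j ∈ O, ⨅ (_ : i ≠ j),
        ((w i * w j / (w i + w j) * ∑ c, (max (μ i c - μ j c) 0)^2 : ℝ) : EReal)) = ⊤ := by
      rw [eq_top_iff]
      refine le_iInf₂ fun i hi => le_iInf₂ fun j hj => ?_
      rw [iInf_neg (not_ne_iff.mpr (hcase i hi j hj))]
    have h1v : (⨅ i ∈ O, ((w i * (Metric.infDist (μ i) (PolySet A bvec)ᶜ)^2 : ℝ) : EReal))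
        = ((w i0 * (Metric.infDist (μ i0) (PolySet A bvec)ᶜ)^2 : ℝ) : EReal) := by
      refine le_antisymm (iInf₂_le i0 hi0) (le_iInf₂ fun i hi => le_of_eq ?_)
      rw [hcase i hi i0 hi0]
    rw [h2top, h1v, min_eq_left le_top,
      show (1/2 : EReal) = ((1/2:ℝ) : EReal) by norm_cast, ← EReal.coe_mul]
    refine le_antisymm (hub1 i0 hi0) (le_iInf₂ fun lam hlam => ?_)
    rw [EReal.coe_le_coe_iff]
    simp only [Set.mem_setOf_eq] at hlam
    rcases hlam with ⟨i, hi, hip⟩ | ⟨i, hi, j, hj, hij, _⟩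
    · have h := hFlower1 lam i hi hip
      rwa [hcase i hi i0 hi0] at h
    · exact absurd (hcase i hi j hj) hij
  · -- O contains two distinct elements
    push_neg at hcase
    obtain ⟨i0, hi0, j0, hj0, hij0⟩ := hcase
    set Q : Finset (Fin K × Fin K) := (O ×ˢ O).filter (fun p => p.1 ≠ p.2) with hQ
    have hQne : Q.Nonempty := ⟨(i0, j0), by
      simp [hQ, Finset.mem_filter, Finset.mem_product, hi0, hj0, hij0]⟩
    obtain ⟨i1, hi1, ha1⟩ := Finset.exists_mem_eq_inf' hO
      (fun i => w i * (Metric.infDist (μ i) (PolySet A bvec)ᶜ)^2)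
    obtain ⟨p, hp, hb1⟩ := Finset.exists_mem_eq_inf' hQne
      (fun p => w p.1 * w p.2 / (w p.1 + w p.2) * ∑ c, (max (μ p.1 c - μ p.2 c) 0)^2)
    have hpQ := Finset.mem_filter.mp hp
    have hpO := Finset.mem_product.mp hpQ.1
    have hφ1 : (⨅ i ∈ O, ((w i * (Metric.infDist (μ i) (PolySet A bvec)ᶜ)^2 : ℝ) : EReal))
        = ((O.inf' hO (fun i => w i * (Metric.infDist (μ i) (PolySet A bvec)ᶜ)^2) : ℝ) : EReal) := by
      refine le_antisymm ?_ (le_iInf₂ fun i hi =>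
        EReal.coe_le_coe_iff.mpr (Finset.inf'_le _ hi))
      rw [ha1]
      exact iInf₂_le i1 hi1
    have hφ2 : (⨅ i ∈ O, ⨅ j ∈ O, ⨅ (_ : i ≠ j),
        ((w i * w j / (w i + w j) * ∑ c, (max (μ i c - μ j c) 0)^2 : ℝ) : EReal))
        = ((Q.inf' hQne (fun p => w p.1 * w p.2 / (w p.1 + w p.2)
            * ∑ c, (max (μ p.1 c - μ p.2 c) 0)^2) : ℝ) : EReal) := by
      refine le_antisymm ?_ (le_iInf₂ fun i hi => le_iInf₂ fun j hj => le_iInf fun hne => ?_)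
      case refine_2 =>
        have hQmem : (i, j) ∈ Q := by
          rw [hQ]
          exact Finset.mem_filter.mpr ⟨Finset.mem_product.mpr ⟨hi, hj⟩, hne⟩
        exact EReal.coe_le_coe_iff.mpr (Finset.inf'_le
          (fun p => w p.1 * w p.2 / (w p.1 + w p.2)
            * ∑ c, (max (μ p.1 c - μ p.2 c) 0)^2) hQmem)
      rw [hb1]
      exact le_trans (iInf₂_le p.1 hpO.1) (le_trans (iInf₂_le p.2 hpO.2)
        (iInf_le _ hpQ.2))
    rw [hφ1, hφ2]
    rw [show min ((O.inf' hO (fun i => w i * (Metric.infDist (μ i) (PolySet A bvec)ᶜ)^2) : ℝ) : EReal)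
          (((Q.inf' hQne (fun p => w p.1 * w p.2 / (w p.1 + w p.2)
            * ∑ c, (max (μ p.1 c - μ p.2 c) 0)^2) : ℝ)) : EReal)
        = ((min (O.inf' hO (fun i => w i * (Metric.infDist (μ i) (PolySet A bvec)ᶜ)^2))
            (Q.inf' hQne (fun p => w p.1 * w p.2 / (w p.1 + w p.2)
              * ∑ c, (max (μ p.1 c - μ p.2 c) 0)^2)) : ℝ) : EReal) from
        (EReal.coe_strictMono.monotone.map_min).symm,
      show (1/2 : EReal) = ((1/2:ℝ) : EReal) by norm_cast, ← EReal.coe_mul]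
    refine le_antisymm ?_ (le_iInf₂ fun lam hlam => ?_)
    · rcases min_cases (O.inf' hO (fun i => w i * (Metric.infDist (μ i) (PolySet A bvec)ᶜ)^2))
        (Q.inf' hQne (fun p => w p.1 * w p.2 / (w p.1 + w p.2)
          * ∑ c, (max (μ p.1 c - μ p.2 c) 0)^2)) with ⟨hmin, _⟩ | ⟨hmin, _⟩
      · rw [hmin, ha1]
        exact hub1 i1 hi1
      · rw [hmin, hb1]
        exact hub2 p.1 hpO.1 p.2 hpO.2 hpQ.2
    · rw [EReal.coe_le_coe_iff]
      simp only [Set.mem_setOf_eq] at hlam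
      rcases hlam with ⟨i, hi, hip⟩ | ⟨i, hi, j, hj, hij, hcle⟩
      · have h1 := hFlower1 lam i hi hip
        have h2 : O.inf' hO (fun i => w i * (Metric.infDist (μ i) (PolySet A bvec)ᶜ)^2)
            ≤ w i * (Metric.infDist (μ i) (PolySet A bvec)ᶜ)^2 := Finset.inf'_le _ hi
        have h3 := min_le_left
          (O.inf' hO (fun i => w i * (Metric.infDist (μ i) (PolySet A bvec)ᶜ)^2))
          (Q.inf' hQne (fun p => w p.1 * w p.2 / (w p.1 + w p.2)
            * ∑ c, (max (μ p.1 c - μ p.2 c) 0)^2))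
        linarith
      · have h1 := hFlower2 lam i j hi hj hij hcle
        have h2 : Q.inf' hQne (fun p => w p.1 * w p.2 / (w p.1 + w p.2)
              * ∑ c, (max (μ p.1 c - μ p.2 c) 0)^2)
            ≤ w i * w j / (w i + w j) * ∑ c, (max (μ i c - μ j c) 0)^2 := by
          have hQmem : (i, j) ∈ Q := by
            rw [hQ]
            exact Finset.mem_filter.mpr ⟨Finset.mem_product.mpr ⟨hi, hj⟩, hij⟩
          exact Finset.inf'_le (fun p => w p.1 * w p.2 / (w p.1 + w p.2)
            * ∑ c, (max (μ p.1 c - μ p.2 c) 0)^2) hQmem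
        have h3 := min_le_right
          (O.inf' hO (fun i => w i * (Metric.infDist (μ i) (PolySet A bvec)ᶜ)^2))
          (Q.inf' hQne (fun p => w p.1 * w p.2 / (w p.1 + w p.2)
            * ∑ c, (max (μ p.1 c - μ p.2 c) 0)^2))
        linarith
end
end

section
/- Let x, y ∈ ℝ^d and let w₁, w₂ ≥ 0 with w₁ + w₂ > 0. Then the infimum over all pairs (a, b) ∈ ℝ^d × ℝ^d satisfying a^c ≤ b^c for every coordinate c ∈ [d] of the quantity (1/2) w₁ ‖x − a‖₂² + (1/2) w₂ ‖y − b‖₂² equals (w₁ w₂ / (2(w₁ + w₂))) Σ_{c∈[d]} (max(x^c − y^c, 0))², and this infimum is attained. -/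
/-!
Both the objective and the bound split into sums over coordinates, so it suffices to solve the
one-dimensional problem of minimising `½ w₁ (x - a)² + ½ w₂ (y - b)²` subject to `a ≤ b`.
If `x ≤ y` the unconstrained minimiser `(x, y)` is feasible. Otherwise, with `p = x - a` and
`q = b - y` we have `p + q ≥ x - y > 0`, and the weighted Cauchy–Schwarz inequality
`(w₁ + w₂)(w₁ p² + w₂ q²) - w₁ w₂ (p + q)² = (w₁ p - w₂ q)²` gives the lower bound, with equality
when `a = b` is the weighted mean `m` of `x` and `y`. In both cases the minimiser is
`(min x m, max y m)`.
-/

open Finset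

section Scalar

variable {w₁ w₂ : ℝ}

lemma mul_sq_sub_le_weighted_cost (hw₁ : 0 ≤ w₁) (hw₂ : 0 ≤ w₂) {x y a b : ℝ} (hxy : y < x)
    (hab : a ≤ b) :
    w₁ * w₂ * (x - y) ^ 2 ≤ (w₁ + w₂) * (w₁ * (x - a) ^ 2 + w₂ * (y - b) ^ 2) := by
  have hcs : w₁ * w₂ * ((x - a) + (b - y)) ^ 2 ≤
      (w₁ + w₂) * (w₁ * (x - a) ^ 2 + w₂ * (y - b) ^ 2) := by
    nlinarith [sq_nonneg (w₁ * (x - a) - w₂ * (b - y))]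
  have hsq : (x - y) ^ 2 ≤ ((x - a) + (b - y)) ^ 2 :=
    pow_le_pow_left₀ (by linarith) (by linarith) 2
  calc w₁ * w₂ * (x - y) ^ 2 ≤ w₁ * w₂ * ((x - a) + (b - y)) ^ 2 :=
        mul_le_mul_of_nonneg_left hsq (mul_nonneg hw₁ hw₂)
    _ ≤ _ := hcs

lemma scalar_cost_lower_bound (hw₁ : 0 ≤ w₁) (hw₂ : 0 ≤ w₂) (hsum : 0 < w₁ + w₂)
    {x y a b : ℝ} (hab : a ≤ b) :
    w₁ * w₂ / (2 * (w₁ + w₂)) * max (x - y) 0 ^ 2 ≤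
      1 / 2 * w₁ * (x - a) ^ 2 + 1 / 2 * w₂ * (y - b) ^ 2 := by
  rcases le_or_gt (x - y) 0 with hxy | hxy
  · rw [max_eq_right hxy, zero_pow two_ne_zero, mul_zero]
    positivity
  · rw [max_eq_left hxy.le, div_mul_eq_mul_div, div_le_iff₀ (by positivity)]
    linarith [mul_sq_sub_le_weighted_cost hw₁ hw₂ (sub_pos.1 hxy) hab]

lemma scalar_cost_min_max (hw₁ : 0 ≤ w₁) (hw₂ : 0 ≤ w₂) (hsum : 0 < w₁ + w₂) (x y : ℝ) :
    let m := (w₁ * x + w₂ * y) / (w₁ + w₂)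
    1 / 2 * w₁ * (x - min x m) ^ 2 + 1 / 2 * w₂ * (y - max y m) ^ 2 =
      w₁ * w₂ / (2 * (w₁ + w₂)) * max (x - y) 0 ^ 2 := by
  intro m
  rcases le_or_gt x y with hxy | hxy
  · have hxm : x ≤ m := by
      rw [le_div_iff₀ hsum]; nlinarith
    have hmy : m ≤ y := by
      rw [div_le_iff₀ hsum]; nlinarith
    rw [min_eq_left hxm, max_eq_left hmy, max_eq_right (by linarith)]
    ring
  · have hmx : m ≤ x := by
      rw [div_le_iff₀ hsum]; nlinarith
    have hym : y ≤ m := by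
      rw [le_div_iff₀ hsum]; nlinarith
    rw [min_eq_right hmx, max_eq_right hym, max_eq_left (by linarith)]
    simp only [m]
    field_simp
    ring

end Scalar

lemma half_weighted_norm_sq_add_eq_sum {ι : Type*} [Fintype ι] (w₁ w₂ : ℝ)
    (x y a b : EuclideanSpace ℝ ι) :
    1 / 2 * w₁ * ‖x - a‖ ^ 2 + 1 / 2 * w₂ * ‖y - b‖ ^ 2 =
      ∑ c, (1 / 2 * w₁ * (x c - a c) ^ 2 + 1 / 2 * w₂ * (y c - b c) ^ 2) := by
  simp only [EuclideanSpace.real_norm_sq_eq, PiLp.sub_apply, mul_sum, sum_add_distrib]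

theorem stmt2_general {d : ℕ} (x y : EuclideanSpace ℝ (Fin d)) (w₁ w₂ : ℝ)
    (hw₁ : 0 ≤ w₁) (hw₂ : 0 ≤ w₂) (hsum : 0 < w₁ + w₂) :
    IsLeast {v : ℝ | ∃ a b : EuclideanSpace ℝ (Fin d), (∀ c, a c ≤ b c) ∧
        v = (1/2 : ℝ) * w₁ * ‖x - a‖^2 + (1/2 : ℝ) * w₂ * ‖y - b‖^2}
      (w₁ * w₂ / (2 * (w₁ + w₂)) * ∑ c, (max (x c - y c) 0)^2) := by
  let m : Fin d → ℝ := fun c ↦ (w₁ * x c + w₂ * y c) / (w₁ + w₂)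
  refine ⟨⟨WithLp.toLp 2 (fun c ↦ min (x c) (m c)), WithLp.toLp 2 (fun c ↦ max (y c) (m c)),
    fun c ↦ (min_le_right _ _).trans (le_max_right _ _), ?_⟩, ?_⟩
  · rw [half_weighted_norm_sq_add_eq_sum, mul_sum]
    exact sum_congr rfl fun c _ ↦ (scalar_cost_min_max hw₁ hw₂ hsum (x c) (y c)).symm
  · rintro v ⟨a, b, hab, rfl⟩
    rw [half_weighted_norm_sq_add_eq_sum, mul_sum]
    exact sum_le_sum fun c _ ↦ scalar_cost_lower_bound hw₁ hw₂ hsum (hab c)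

/-- the infimum of `(1/2)w₁‖x−a‖² + (1/2)w₂‖y−b‖²` over pairs `a ≤ b`
(componentwise) equals `w₁w₂/(2(w₁+w₂)) Σ_c (max(x^c−y^c,0))²`, and it is attained. -/
theorem stmt2 {d : ℕ} (hd : 0 < d) (x y : EuclideanSpace ℝ (Fin d)) (w₁ w₂ : ℝ)
    (hw₁ : 0 ≤ w₁) (hw₂ : 0 ≤ w₂) (hsum : 0 < w₁ + w₂) :
    IsLeast {v : ℝ | ∃ a b : EuclideanSpace ℝ (Fin d), (∀ c, a c ≤ b c) ∧
        v = (1/2 : ℝ) * w₁ * ‖x - a‖^2 + (1/2 : ℝ) * w₂ * ‖y - b‖^2}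
      (w₁ * w₂ / (2 * (w₁ + w₂)) * ∑ c, (max (x c - y c) 0)^2) :=
  stmt2_general x y w₁ w₂ hw₁ hw₂ hsum
end

section
/- Let O ⊆ [K], let i ∈ [K]∖O, let w ∈ ℝ^K have nonnegative entries, let μ ∈ (ℝ^d)^K, and assume P ≠ ∅. Define Alt_i⁺(O) := {λ ∈ (ℝ^d)^K : λ_i ∈ P and ∀ j ∈ O, ¬(λ_i ≺ λ_j)}. Then inf_{λ ∈ Alt_i⁺(O)} Σ_{k∈[K]} (1/2) w_k ‖μ_k − λ_k‖₂² = inf_{λ ∈ P} [ (1/2) w_i ‖μ_i − λ‖₂² + Σ_{j∈O} (1/2) w_j min_{c∈[d]} (max(μ_j^c − λ^c, 0))² ]. -/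
noncomputable section

/-!
The constraints of `Alt_i⁺(O)` decouple once `λ_i = x` is fixed: each `λ_j` with `j ∈ O` only has
to avoid the open cone of points dominating `x`, while every other `λ_k` is free and is taken to be
`μ_k`. The squared distance from `μ_j` to the complement of that cone is
`min_c (max (μ_j^c - x^c) 0)²`: a point not dominating `x` lies weakly below `x` in some coordinate
`c` (or equals `x`), which costs at least that much in coordinate `c` alone, and pushing `μ_j` down
along the best coordinate to just below `x^c` shows the bound is approached, though not attained.
-/

open Filter Topology

lemma max_zero_sq_le_sq {a b : ℝ} (h : a ≤ b) : (max a 0) ^ 2 ≤ b ^ 2 :=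
  sq_le_sq.mpr <| by
    rw [abs_of_nonneg (le_max_right a 0)]
    exact max_le (h.trans (le_abs_self b)) (abs_nonneg b)

section Dominance

variable {d : ℕ}

lemma sq_apply_le_sq_norm (v : Evec d) (c : Fin d) : v c ^ 2 ≤ ‖v‖ ^ 2 :=
  sq_le_sq.mpr <| by simpa [abs_norm] using PiLp.norm_apply_le v c

lemma iInf_sq_max_sub_le_of_not_pdom {x y : Evec d} (h : ¬ Pdom x y) (m : Evec d) :
    ⨅ c, (max (m c - x c) 0) ^ 2 ≤ ‖m - y‖ ^ 2 := by
  have below : ∀ c, y c ≤ x c → ⨅ c, (max (m c - x c) 0) ^ 2 ≤ ‖m - y‖ ^ 2 := fun c hc =>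
    calc ⨅ c, (max (m c - x c) 0) ^ 2
        ≤ (max (m c - x c) 0) ^ 2 := ciInf_le (Finite.bddBelow_range _) c
      _ ≤ (m c - y c) ^ 2 := max_zero_sq_le_sq (by linarith)
      _ ≤ ‖m - y‖ ^ 2 := sq_apply_le_sq_norm (m - y) c
  by_cases hle : ∀ c, x c ≤ y c
  · obtain rfl : x = y := not_not.mp fun hne => h ⟨hle, hne⟩
    rcases isEmpty_or_nonempty (Fin d) with _ | ⟨⟨c⟩⟩
    · rw [Real.iInf_of_isEmpty]
      positivity
    · exact below c le_rfl
  · obtain ⟨c, hc⟩ := not_forall.mp hle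
    exact below c (not_le.mp hc).le

lemma exists_tendsto_sq_norm_sub_not_pdom (x m : Evec d) :
    ∃ y : ℝ → Evec d, (∀ δ > 0, ¬ Pdom x (y δ)) ∧
      Tendsto (fun δ => ‖m - y δ‖ ^ 2) (𝓝[>] 0) (𝓝 (⨅ c, (max (m c - x c) 0) ^ 2)) := by
  rcases isEmpty_or_nonempty (Fin d) with _ | _
  · refine ⟨fun _ => m, fun _ _ h => h.2 (Subsingleton.elim _ _), ?_⟩
    simp
  obtain ⟨c, hc⟩ := Finite.exists_min fun c => (max (m c - x c) 0) ^ 2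
  set g := max (m c - x c) 0
  have hmin : ⨅ c, (max (m c - x c) 0) ^ 2 = g ^ 2 :=
    le_antisymm (ciInf_le (Finite.bddBelow_range _) c) (le_ciInf hc)
  refine ⟨fun δ => m - EuclideanSpace.single c (g + δ), fun δ hδ h => ?_, ?_⟩
  · have hcx := h.1 c
    simp only [PiLp.sub_apply, PiLp.single_apply, if_true] at hcx
    linarith [le_max_left (m c - x c) 0]
  · simp only [hmin, sub_sub_cancel, PiLp.norm_single, Real.norm_eq_abs, sq_abs]
    have hcont : Continuous fun δ : ℝ => (g + δ) ^ 2 := by fun_prop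
    simpa using (hcont.tendsto 0).mono_left nhdsWithin_le_nhds

end Dominance

section Cost

variable {K d : ℕ} (w : Fin K → ℝ) (μ : Fin K → Evec d) {O : Finset (Fin K)} {i : Fin K}

lemma reduced_cost_le_cost (hi : i ∉ O) (hw : ∀ k, 0 ≤ w k) (lam : Fin K → Evec d)
    (hlam : ∀ j ∈ O, ¬ Pdom (lam i) (lam j)) :
    (1/2 : ℝ) * w i * ‖μ i - lam i‖ ^ 2 +
        ∑ j ∈ O, (1/2 : ℝ) * w j * ⨅ c, (max (μ j c - lam i c) 0) ^ 2 ≤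
      ∑ k, (1/2 : ℝ) * w k * ‖μ k - lam k‖ ^ 2 := by
  have hw' : ∀ k, 0 ≤ (1/2 : ℝ) * w k := fun k => mul_nonneg (by norm_num) (hw k)
  calc (1/2 : ℝ) * w i * ‖μ i - lam i‖ ^ 2 +
        ∑ j ∈ O, (1/2 : ℝ) * w j * ⨅ c, (max (μ j c - lam i c) 0) ^ 2
      ≤ (1/2 : ℝ) * w i * ‖μ i - lam i‖ ^ 2 + ∑ j ∈ O, (1/2 : ℝ) * w j * ‖μ j - lam j‖ ^ 2 := by
        gcongr with j hj
        · exact hw' j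
        · exact iInf_sq_max_sub_le_of_not_pdom (hlam j hj) (μ j)
    _ = ∑ k ∈ insert i O, (1/2 : ℝ) * w k * ‖μ k - lam k‖ ^ 2 := by
        rw [Finset.sum_insert hi]
    _ ≤ ∑ k, (1/2 : ℝ) * w k * ‖μ k - lam k‖ ^ 2 :=
        Finset.sum_le_sum_of_subset_of_nonneg (Finset.subset_univ _)
          fun k _ _ => mul_nonneg (hw' k) (sq_nonneg _)

lemma exists_tendsto_cost (hi : i ∉ O) (x : Evec d) :
    ∃ lam : ℝ → Fin K → Evec d, (∀ δ, lam δ i = x) ∧ (∀ δ > 0, ∀ j ∈ O, ¬ Pdom x (lam δ j)) ∧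
      Tendsto (fun δ => ∑ k, (1/2 : ℝ) * w k * ‖μ k - lam δ k‖ ^ 2) (𝓝[>] 0)
        (𝓝 ((1/2 : ℝ) * w i * ‖μ i - x‖ ^ 2 +
          ∑ j ∈ O, (1/2 : ℝ) * w j * ⨅ c, (max (μ j c - x c) 0) ^ 2)) := by
  choose y hy hlim using fun j => exists_tendsto_sq_norm_sub_not_pdom x (μ j)
  set lam : ℝ → Fin K → Evec d :=
    fun δ => Function.update (fun j => if j ∈ O then y j δ else μ j) i x with hlam
  have hlamO : ∀ δ, ∀ j ∈ O, lam δ j = y j δ := fun δ j hj => by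
    simp [hlam, Function.update_of_ne (ne_of_mem_of_not_mem hj hi), hj]
  have hcost : ∀ δ, ∑ k, (1/2 : ℝ) * w k * ‖μ k - lam δ k‖ ^ 2 =
      (1/2 : ℝ) * w i * ‖μ i - x‖ ^ 2 + ∑ j ∈ O, (1/2 : ℝ) * w j * ‖μ j - y j δ‖ ^ 2 := by
    intro δ
    rw [← Finset.sum_subset (Finset.subset_univ (insert i O)), Finset.sum_insert hi]
    · simp only [hlam, Function.update_self]
      congr 1
      exact Finset.sum_congr rfl fun j hj => by rw [← hlamO δ j hj]
    · intro k _ hk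
      rw [Finset.mem_insert, not_or] at hk
      simp [hlam, Function.update_of_ne hk.1, hk.2]
  refine ⟨lam, fun δ => by simp [hlam], fun δ hδ j hj => hlamO δ j hj ▸ hy j δ hδ, ?_⟩
  simp only [hcost]
  exact tendsto_const_nhds.add (tendsto_finsetSum _ fun j _ => (hlim j).const_mul _)

end Cost

theorem stmt3_general {K d m : ℕ}
    (A : Fin m → Fin d → ℝ) (bvec : Fin m → ℝ)
    (O : Finset (Fin K)) (i : Fin K) (hi : i ∉ O)
    (w : Fin K → ℝ) (hw : ∀ k, 0 ≤ w k)
    (μ : Fin K → Evec d)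
    (hP : (PolySet A bvec).Nonempty) :
    sInf {v : ℝ | ∃ lam : Fin K → Evec d,
        (lam i ∈ PolySet A bvec ∧ ∀ j ∈ O, ¬ Pdom (lam i) (lam j)) ∧
        v = ∑ k, (1/2 : ℝ) * w k * ‖μ k - lam k‖^2} =
    sInf {v : ℝ | ∃ lam ∈ PolySet A bvec,
        v = (1/2 : ℝ) * w i * ‖μ i - lam‖^2 +
          ∑ j ∈ O, (1/2 : ℝ) * w j * ⨅ c, (max (μ j c - lam c) 0)^2} := by
  obtain ⟨p, hp⟩ := hP
  have hw' : ∀ k, 0 ≤ (1/2 : ℝ) * w k := fun k => mul_nonneg (by norm_num) (hw k)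
  apply le_antisymm
  · refine le_csInf ⟨_, p, hp, rfl⟩ ?_
    rintro _ ⟨x, hx, rfl⟩
    obtain ⟨lam, hlam_i, hlam_O, hlim⟩ := exists_tendsto_cost w μ hi x
    refine ge_of_tendsto hlim (eventually_nhdsWithin_of_forall fun δ hδ => csInf_le ?_ ?_)
    · refine ⟨0, ?_⟩
      rintro _ ⟨lam, -, rfl⟩
      exact Finset.sum_nonneg fun k _ => mul_nonneg (hw' k) (sq_nonneg _)
    · exact ⟨lam δ, ⟨hlam_i δ ▸ hx, hlam_i δ ▸ hlam_O δ hδ⟩, rfl⟩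
  · refine le_csInf ⟨_, fun _ => p, ⟨hp, fun _ _ h => h.2 rfl⟩, rfl⟩ ?_
    rintro _ ⟨lam, ⟨hlam_P, hlam_O⟩, rfl⟩
    have hbdd : BddBelow {v : ℝ | ∃ x ∈ PolySet A bvec, v = (1/2 : ℝ) * w i * ‖μ i - x‖ ^ 2 +
        ∑ j ∈ O, (1/2 : ℝ) * w j * ⨅ c, (max (μ j c - x c) 0) ^ 2} := by
      refine ⟨0, ?_⟩
      rintro _ ⟨x, -, rfl⟩
      exact add_nonneg (mul_nonneg (hw' i) (sq_nonneg _))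
        (Finset.sum_nonneg fun j _ => mul_nonneg (hw' j) (Real.iInf_nonneg fun _ => sq_nonneg _))
    exact (csInf_le hbdd ⟨lam i, hlam_P, rfl⟩).trans (reduced_cost_le_cost w μ hi hw lam hlam_O)

/-- the transportation cost to `Alt_i⁺(O)` equals the value of the
reduced optimization problem over points `λ ∈ P`. -/
theorem stmt3 {K d m : ℕ} (hK : 0 < K) (hd : 0 < d) (hm : 0 < m)
    (A : Fin m → Fin d → ℝ) (bvec : Fin m → ℝ)
    (O : Finset (Fin K)) (i : Fin K) (hi : i ∉ O)
    (w : Fin K → ℝ) (hw : ∀ k, 0 ≤ w k)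
    (μ : Fin K → Evec d)
    (hP : (PolySet A bvec).Nonempty) :
    sInf {v : ℝ | ∃ lam : Fin K → Evec d,
        (lam i ∈ PolySet A bvec ∧ ∀ j ∈ O, ¬ Pdom (lam i) (lam j)) ∧
        v = ∑ k, (1/2 : ℝ) * w k * ‖μ k - lam k‖^2} =
    sInf {v : ℝ | ∃ lam ∈ PolySet A bvec,
        v = (1/2 : ℝ) * w i * ‖μ i - lam‖^2 +
          ∑ j ∈ O, (1/2 : ℝ) * w j * ⨅ c, (max (μ j c - lam c) 0)^2} :=
  stmt3_general A bvec O i hi w hw μ hP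
end
end

section
/- Suppose the strict confidence event holds, and suppose the stopping condition holds, namely: (Z₁) for every i ∈ Ô, η̂_i ≥ U_i, and for every j ∈ Ô∖{i}, M̂⁻(i,j) ≥ 0; and (Z₂) for every i ∈ [K]∖Ô, if μ̂_i ∈ P then ξ_i ≥ 0, while if μ̂_i ∉ P then η̂_i ≥ U_i or ξ_i ≥ 0. Then the recommendation is correct: Ô = O*, the set S := (F̂ ∪ G)∖Ô satisfies S ⊆ SubOpt, the set I := [K]∖(F̂ ∪ G) satisfies I ⊆ [K]∖F, and (Ô, S, I) is a partition of [K] with (S, I) ∈ M(P,μ). -/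
noncomputable section
open scoped Classical
open Metric Set

def etaD {d : ℕ} (P : Set (Evec d)) (x : Evec d) : ℝ :=
  if x ∈ P then infDist x Pᶜ else infDist x P

def FeasSet {K d : ℕ} (P : Set (Evec d)) (μ : Fin K → Evec d) : Set (Fin K) := {i | μ i ∈ P}

def SubOptSet {K d : ℕ} (P : Set (Evec d)) (μ : Fin K → Evec d) : Set (Fin K) :=
  {i | ∃ j, μ j ∈ P ∧ Pdom (μ i) (μ j)}

def ValidAnswer {K d : ℕ} (P : Set (Evec d)) (μ : Fin K → Evec d) (S I : Set (Fin K)) : Prop :=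
  S ⊆ SubOptSet P μ ∧ I ⊆ (FeasSet P μ)ᶜ ∧ S ∩ I = ∅ ∧ S ∪ I = (OptSet P μ)ᶜ

def bigM {K d : ℕ} (μ : Fin K → Evec d) (i j : Fin K) : ℝ := ⨆ c, (μ i c - μ j c)

def smallm {K d : ℕ} (μ : Fin K → Evec d) (i j : Fin K) : ℝ := ⨅ c, (μ j c - μ i c)

lemma exists_nonneg_of_le_biSup {α : Type*} [Finite α] (S : Set α) (f : α → ℝ)
    (h : (0 : EReal) ≤ ⨆ j ∈ S, ((f j : ℝ) : EReal)) : ∃ j ∈ S, 0 ≤ f j := by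
  rcases S.eq_empty_or_nonempty with rfl | hS
  · simp at h
  · obtain ⟨j₀, hj₀, hmax⟩ := S.exists_max_image f S.toFinite hS
    refine ⟨j₀, hj₀, ?_⟩
    have hle : (⨆ j ∈ S, ((f j : ℝ) : EReal)) ≤ ((f j₀ : ℝ) : EReal) :=
      iSup₂_le fun j hj => EReal.coe_le_coe_iff.mpr (hmax j hj)
    exact_mod_cast h.trans hle

/-- correctness of the stopping and recommendation rules of e-cAPE.
Under the strict confidence event, if the stopping conditions `Z₁ ≥ 0` and `Z₂ ≥ 0`
hold, then `Ô = O*`, `S := (F̂∪G)∖Ô ⊆ SubOpt`, `I := (F̂∪G)ᶜ ⊆ Fᶜ`, and `(Ô, S, I)`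
is a partition of `[K]` with `(S, I)` a valid answer. -/
theorem stmt7 {K d m : ℕ} (hK : 0 < K) (hd : 0 < d) (hm : 0 < m)
    (A : Fin m → Fin d → ℝ) (bvec : Fin m → ℝ)
    (P : Set (Evec d)) (hPdef : P = PolySet A bvec)
    (μ μhat : Fin K → Evec d) (β U : Fin K → ℝ)
    (hconf1 : ∀ i, ∀ c, |μhat i c - μ i c| < β i)
    (hconf2 : ∀ i, ‖μhat i - μ i‖ < U i)
    (Fhat Ohat G : Set (Fin K)) (ηhat : Fin K → ℝ)
    (hFhat : Fhat = FeasSet P μhat)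
    (hOhat : Ohat = OptSet P μhat)
    (hηhat : ∀ i, ηhat i = etaD P (μhat i))
    (hG : G = {i | i ∉ Fhat ∧ ηhat i < U i})
    (Mhatm mhatm : Fin K → Fin K → ℝ)
    (hMhatm : ∀ i j, Mhatm i j = bigM μhat i j - (β i + β j))
    (hmhatm : ∀ i j, mhatm i j = smallm μhat i j - (β i + β j))
    (ξ : Fin K → EReal)
    (hξ : ∀ i, ξ i = ⨆ j ∈ (Fhat ∪ G) \ {i}, ((mhatm i j : ℝ) : EReal))
    (hZ1 : ∀ i ∈ Ohat, U i ≤ ηhat i ∧ ∀ j ∈ Ohat \ {i}, 0 ≤ Mhatm i j)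
    (hZ2 : ∀ i ∉ Ohat, (μhat i ∈ P → 0 ≤ ξ i) ∧ (μhat i ∉ P → U i ≤ ηhat i ∨ 0 ≤ ξ i)) :
    Ohat = OptSet P μ ∧
    ValidAnswer P μ ((Fhat ∪ G) \ Ohat) (Fhat ∪ G)ᶜ ∧
    Ohat ∪ ((Fhat ∪ G) \ Ohat) ∪ (Fhat ∪ G)ᶜ = Set.univ ∧
    Ohat ∩ ((Fhat ∪ G) \ Ohat) = ∅ ∧ Ohat ∩ (Fhat ∪ G)ᶜ = ∅ := by

  haveI : Nonempty (Fin d) := ⟨⟨0, hd⟩⟩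
  have hFmem : ∀ i, i ∈ Fhat ↔ μhat i ∈ P := by intro i; rw [hFhat]; rfl
  have hGmem : ∀ i, i ∈ G ↔ (i ∉ Fhat ∧ ηhat i < U i) := by intro i; rw [hG]; rfl
  have hOmem : ∀ i, i ∈ Ohat ↔
      (μhat i ∈ P ∧ ∀ j, μhat j ∈ P → ¬ Pdom (μhat i) (μhat j)) := by
    intro i; rw [hOhat]; rfl
  have hdist : ∀ i, dist (μhat i) (μ i) < U i := by
    intro i; rw [dist_eq_norm]; exact hconf2 i
  -- feasibility transfer
  have hfin : ∀ i, μhat i ∈ P → U i ≤ ηhat i → μ i ∈ P := by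
    intro i hiP hU
    by_contra hnot
    have h1 : infDist (μhat i) Pᶜ ≤ dist (μhat i) (μ i) := infDist_le_dist_of_mem hnot
    have h3 : ηhat i = infDist (μhat i) Pᶜ := by rw [hηhat i, etaD, if_pos hiP]
    have := hdist i
    linarith
  have hC : ∀ i, μ i ∈ P → i ∈ Fhat ∪ G := by
    intro i hiP
    by_cases hi : μhat i ∈ P
    · exact Or.inl ((hFmem i).mpr hi)
    · right
      rw [hGmem]
      refine ⟨fun h => hi ((hFmem i).mp h), ?_⟩
      have h1 : infDist (μhat i) P ≤ dist (μhat i) (μ i) := infDist_le_dist_of_mem hiP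
      have h3 : ηhat i = infDist (μhat i) P := by rw [hηhat i, etaD, if_neg hi]
      have := hdist i
      linarith
  have hD : ∀ i ∈ Ohat, μ i ∈ P := fun i hi =>
    hfin i ((hOmem i).mp hi).1 (hZ1 i hi).1
  have hOsub : Ohat ⊆ Fhat ∪ G := fun i hi =>
    Or.inl ((hFmem i).mpr ((hOmem i).mp hi).1)
  -- no domination inside Ohat
  have hE : ∀ i ∈ Ohat, ∀ j ∈ Ohat, ¬ Pdom (μ i) (μ j) := by
    intro i hi j hj hdom
    by_cases hij : j = i
    · subst hij; exact hdom.2 rfl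
    · have hM := (hZ1 i hi).2 j ⟨hj, hij⟩
      rw [hMhatm] at hM
      obtain ⟨c₀, hc₀⟩ := Finite.exists_max (fun c => μhat i c - μhat j c)
      have hsup : bigM μhat i j ≤ μhat i c₀ - μhat j c₀ := ciSup_le hc₀
      have h1 := hconf1 i c₀; have h2 := hconf1 j c₀
      rw [abs_lt] at h1 h2
      have hlt : μ j c₀ < μ i c₀ := by linarith
      exact absurd (hdom.1 c₀) (not_le.mpr hlt)
  -- one-step strict domination
  have hstep : ∀ j, j ∈ Fhat ∪ G → j ∉ Ohat → ∃ k ∈ Fhat ∪ G, ∀ c, μ j c < μ k c := by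
    intro j hjFG hjO
    have hxi : (0 : EReal) ≤ ξ j := by
      by_cases hjP : μhat j ∈ P
      · exact (hZ2 j hjO).1 hjP
      · have hjG : j ∈ G := by
          rcases hjFG with h | h
          · exact absurd ((hFmem j).mp h) hjP
          · exact h
        rcases (hZ2 j hjO).2 hjP with h | h
        · exact absurd ((hGmem j).mp hjG).2 (not_lt.mpr h)
        · exact h
    rw [hξ j] at hxi
    obtain ⟨k, hk, hk0⟩ := exists_nonneg_of_le_biSup _ _ hxi
    refine ⟨k, hk.1, ?_⟩
    rw [hmhatm] at hk0
    intro c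
    have hinfle : smallm μhat j k ≤ μhat k c - μhat j c :=
      ciInf_le (Finite.bddBelow_range _) c
    have h1 := hconf1 j c; have h2 := hconf1 k c
    rw [abs_lt] at h1 h2
    linarith
  -- chained domination ends in Ohat
  have hL : ∀ j, j ∈ Fhat ∪ G → j ∉ Ohat → ∃ k ∈ Ohat, ∀ c, μ j c < μ k c := by
    intro j hjFG hjO
    have hTne : {k | k ∈ Fhat ∪ G ∧ ∀ c, μ j c < μ k c}.Nonempty := by
      obtain ⟨k, hk1, hk2⟩ := hstep j hjFG hjO
      exact ⟨k, hk1, hk2⟩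
    obtain ⟨k, hkT, hkmax⟩ :=
      Set.exists_max_image _ (fun k => μ k ⟨0, hd⟩) (Set.toFinite _) hTne
    refine ⟨k, ?_, hkT.2⟩
    by_contra hkO
    obtain ⟨k', hk'1, hk'2⟩ := hstep k hkT.1 hkO
    have hk'T : k' ∈ {k | k ∈ Fhat ∪ G ∧ ∀ c, μ j c < μ k c} :=
      ⟨hk'1, fun c => (hkT.2 c).trans (hk'2 c)⟩
    exact absurd (hkmax k' hk'T) (not_le.mpr (hk'2 ⟨0, hd⟩))
  have hPdomOf : ∀ i k : Fin K, (∀ c, μ i c < μ k c) → Pdom (μ i) (μ k) := by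
    intro i k hlt
    refine ⟨fun c => (hlt c).le, fun heq => ?_⟩
    rw [heq] at hlt
    exact lt_irrefl _ (hlt ⟨0, hd⟩)
  have hOeq : Ohat = OptSet P μ := by
    ext i
    constructor
    · intro hi
      refine ⟨hD i hi, ?_⟩
      intro j hjP hdom
      by_cases hjO : j ∈ Ohat
      · exact hE i hi j hjO hdom
      · obtain ⟨k, hkO, hk⟩ := hL j (hC j hjP) hjO
        have hlt : ∀ c, μ i c < μ k c := fun c => lt_of_le_of_lt (hdom.1 c) (hk c)
        exact hE i hi k hkO (hPdomOf i k hlt)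
    · intro hi
      obtain ⟨hiP, hiOpt⟩ := hi
      by_contra hiO
      obtain ⟨k, hkO, hk⟩ := hL i (hC i hiP) hiO
      exact hiOpt k (hD k hkO) (hPdomOf i k hk)
  have hSsub : ((Fhat ∪ G) \ Ohat) ⊆ SubOptSet P μ := by
    intro j hj
    obtain ⟨k, hkO, hk⟩ := hL j hj.1 hj.2
    exact ⟨k, hD k hkO, hPdomOf j k hk⟩
  refine ⟨hOeq, ⟨hSsub, ?_, ?_, ?_⟩, ?_, ?_, ?_⟩
  · intro i hi hmem
    exact hi (hC i hmem)
  · ext i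
    simp only [mem_inter_iff, mem_diff, mem_compl_iff, mem_empty_iff_false, iff_false]
    tauto
  · rw [← hOeq]
    ext i
    simp only [mem_union, mem_diff, mem_compl_iff]
    constructor
    · rintro (⟨_, h⟩ | h)
      · exact h
      · exact fun hiO => h (hOsub hiO)
    · intro hiO
      by_cases hFG : i ∈ Fhat ∪ G
      · exact Or.inl ⟨hFG, hiO⟩
      · exact Or.inr hFG
  · ext i
    simp only [mem_union, mem_diff, mem_compl_iff, mem_univ, iff_true]
    by_cases h1 : i ∈ Ohat
    · tauto
    · by_cases h2 : i ∈ Fhat ∪ G <;> tauto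
  · ext i
    simp only [mem_inter_iff, mem_diff, mem_empty_iff_false, iff_false]
    tauto
  · ext i
    simp only [mem_inter_iff, mem_compl_iff, mem_empty_iff_false, iff_false]
    rintro ⟨hi, hni⟩
    exact hni (hOsub hi)
end
end

section
/- Suppose that for every i ∈ [K]∖Ô the following strict condition holds: if μ̂_i ∈ P then ξ_i > 0, while if μ̂_i ∉ P then η̂_i > U_i or ξ_i > 0 (this is the condition Z₂ > 0). Then for every i ∈ G there exists j ∈ Ô such that μ̂_i ≺ μ̂_j. -/
noncomputable section
open scoped Classical
open Metric Set

/-- if `Z₂ > 0` (in its strict per-arm formulation), then every arm of `G`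
is empirically dominated by an arm of the empirical Pareto set `Ô`. -/
theorem stmt8 {K d m : ℕ} (hK : 0 < K) (hd : 0 < d) (hm : 0 < m)
    (A : Fin m → Fin d → ℝ) (bvec : Fin m → ℝ)
    (P : Set (Evec d)) (hPdef : P = PolySet A bvec)
    (μhat : Fin K → Evec d) (β U : Fin K → ℝ)
    (hβ : ∀ i, 0 ≤ β i) (hU : ∀ i, 0 ≤ U i)
    (Fhat Ohat G : Set (Fin K)) (ηhat : Fin K → ℝ)
    (hFhat : Fhat = FeasSet P μhat)
    (hOhat : Ohat = OptSet P μhat)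
    (hηhat : ∀ i, ηhat i = etaD P (μhat i))
    (hG : G = {i | i ∉ Fhat ∧ ηhat i < U i})
    (mhatm : Fin K → Fin K → ℝ)
    (hmhatm : ∀ i j, mhatm i j = smallm μhat i j - (β i + β j))
    (ξ : Fin K → EReal)
    (hξ : ∀ i, ξ i = ⨆ j ∈ (Fhat ∪ G) \ {i}, ((mhatm i j : ℝ) : EReal))
    (hZ2 : ∀ i ∉ Ohat, (μhat i ∈ P → 0 < ξ i) ∧ (μhat i ∉ P → U i < ηhat i ∨ 0 < ξ i)) :
    ∀ i ∈ G, ∃ j ∈ Ohat, Pdom (μhat i) (μhat j) := by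
  haveI : Nonempty (Fin d) := ⟨⟨0, hd⟩⟩
  have step : ∀ i : Fin K, 0 < ξ i → ∃ j, j ∈ Fhat ∪ G ∧ ∀ c, μhat i c < μhat j c := by
    intro i hpos
    rw [hξ i] at hpos
    simp only [lt_iSup_iff] at hpos
    obtain ⟨j, hj, hpos⟩ := hpos
    have hm0 : (0 : ℝ) < mhatm i j := by exact_mod_cast hpos
    rw [hmhatm] at hm0
    have hb : 0 ≤ β i + β j := add_nonneg (hβ i) (hβ j)
    refine ⟨j, hj.1, fun c => ?_⟩
    have hle : smallm μhat i j ≤ μhat j c - μhat i c :=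
      ciInf_le (Finite.bddBelow_range _) c
    linarith
  intro i hiG
  have hiG' : i ∉ Fhat ∧ ηhat i < U i := by rw [hG] at hiG; exact hiG
  have hiP : μhat i ∉ P := by
    intro h; exact hiG'.1 (by rw [hFhat]; exact h)
  have hiO : i ∉ Ohat := by rw [hOhat]; intro h; exact hiP h.1
  have hξi : 0 < ξ i := by
    rcases (hZ2 i hiO).2 hiP with h | h
    · exact absurd hiG'.2 (not_lt.mpr h.le)
    · exact h
  obtain ⟨j0, hj0mem, hj0lt⟩ := step i hξi
  set g : Fin K → ℝ := fun j => ∑ c, μhat j c with hgdef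
  set s : Finset (Fin K) :=
    Finset.univ.filter (fun j => j ∈ Fhat ∪ G ∧ ∀ c, μhat i c < μhat j c) with hsdef
  have hsne : s.Nonempty :=
    ⟨j0, by
      simp only [hsdef, Finset.mem_filter, Finset.mem_univ, true_and]
      exact ⟨hj0mem, hj0lt⟩⟩
  obtain ⟨jstar, hjs, hmax⟩ := s.exists_max_image g hsne
  have hjsprop : jstar ∈ Fhat ∪ G ∧ ∀ c, μhat i c < μhat jstar c := by
    simpa [hsdef] using hjs
  have hnoimp : ¬ (0 < ξ jstar) := by
    intro hp
    obtain ⟨j', hj'mem, hj'lt⟩ := step jstar hp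
    have hj's : j' ∈ s := by
      simp only [hsdef, Finset.mem_filter, Finset.mem_univ, true_and]
      exact ⟨hj'mem, fun c => (hjsprop.2 c).trans (hj'lt c)⟩
    have hlt : g jstar < g j' := by
      apply Finset.sum_lt_sum_of_nonempty Finset.univ_nonempty
      intro c _; exact hj'lt c
    exact absurd (hmax j' hj's) (not_le.mpr hlt)
  have hjO : jstar ∈ Ohat := by
    by_contra hno
    rcases Classical.em (μhat jstar ∈ P) with hP | hP
    · exact hnoimp ((hZ2 jstar hno).1 hP)
    · have hjG : jstar ∈ G := by
        rcases hjsprop.1 with h | h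
        · exact absurd (by rw [hFhat] at h; exact h) hP
        · exact h
      have hlt : ηhat jstar < U jstar := by rw [hG] at hjG; exact hjG.2
      rcases (hZ2 jstar hno).2 hP with h | h
      · linarith
      · exact hnoimp h
  refine ⟨jstar, hjO, fun c => (hjsprop.2 c).le, fun heq => ?_⟩
  have := hjsprop.2 ⟨0, hd⟩
  rw [heq] at this
  exact lt_irrefl _ this
end
end

section
/- If b ∈ I or c ∈ I, then {b, c} ∩ W²(I) ≠ ∅; that is, at least one of the leader b and the challenger c lies in I and satisfies η_i ≤ 2U_i. -/
noncomputable section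
open scoped Classical
open Metric Set

/-- The sub-optimality gap `max_{j ∈ O*} m(i,j)` of an arm (as an extended real). -/
def pGapSub {K d : ℕ} (P : Set (Evec d)) (μ : Fin K → Evec d) (i : Fin K) : EReal :=
  ⨆ j ∈ OptSet P μ, ((smallm μ i j : ℝ) : EReal)

/-- The gap `Δ_i(S)` (extended-real valued; minima over empty sets are `+∞`). -/
def pGap {K d : ℕ} (P : Set (Evec d)) (μ : Fin K → Evec d) (S : Set (Fin K)) (i : Fin K) :
    EReal :=
  if i ∈ OptSet P μ then
    min (⨅ j ∈ OptSet P μ \ {i}, ((min (bigM μ i j) (bigM μ j i) : ℝ) : EReal))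
        (⨅ j ∈ S, (((max (bigM μ j i) 0 : ℝ) : EReal) + pGapSub P μ j))
  else pGapSub P μ i

/-- The under-explored set `W(S,I) = W¹(S) ∪ W²(I) ∪ W³(S)`. -/
def Wunder {K d : ℕ} (P : Set (Evec d)) (μ : Fin K → Evec d) (S I : Set (Fin K))
    (β U : Fin K → ℝ) : Set (Fin K) :=
  {i | i ∈ OptSet P μ ∧ (pGap P μ S i ≤ ((4 * β i : ℝ) : EReal) ∨ etaD P (μ i) ≤ 2 * U i)} ∪
  {i | i ∈ I ∧ etaD P (μ i) ≤ 2 * U i} ∪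
  {i | i ∈ S ∧ pGap P μ S i ≤ ((4 * β i : ℝ) : EReal)}

/-- if the leader `b` or the challenger `c` lies in `I`, then one of them
lies in `W²(I)`, i.e. lies in `I` and satisfies `η_i ≤ 2U_i`. -/
theorem stmt9 {K d m : ℕ} (hK : 0 < K) (hd : 0 < d) (hm : 0 < m)
    (A : Fin m → Fin d → ℝ) (bvec : Fin m → ℝ)
    (P : Set (Evec d)) (hPdef : P = PolySet A bvec)
    (μ μhat : Fin K → Evec d)
    (N : Fin K → ℕ) (hN : ∀ i, 1 ≤ N i)
    (σ σu f g : ℝ) (hσ : 0 < σ) (hσu : 0 < σu) (hf : 0 < f) (hg : 0 < g)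
    (β U : Fin K → ℝ)
    (hβ : ∀ i, β i = σ * Real.sqrt (2 * f / (N i : ℝ)))
    (hU : ∀ i, U i = σu * Real.sqrt (2 * g / (N i : ℝ)))
    (hconf1 : ∀ i, ∀ c, |μhat i c - μ i c| < β i)
    (hconf2 : ∀ i, ‖μhat i - μ i‖ < U i)
    (Fhat Ohat G : Set (Fin K)) (ηhat γ : Fin K → ℝ)
    (hFhat : Fhat = FeasSet P μhat)
    (hOhat : Ohat = OptSet P μhat)
    (hηhat : ∀ i, ηhat i = etaD P (μhat i))
    (hγ : ∀ i, γ i = (N i : ℝ) * (ηhat i) ^ 2 / (2 * σu ^ 2) - g)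
    (hG : G = {i | i ∉ Fhat ∧ γ i < 0})
    (Mhatm mhatm : Fin K → Fin K → ℝ)
    (hMhatm : ∀ i j, Mhatm i j = bigM μhat i j - (β i + β j))
    (hmhatm : ∀ i j, mhatm i j = smallm μhat i j - (β i + β j))
    (ξ T : Fin K → EReal)
    (hξ : ∀ i, ξ i = ⨆ j ∈ (Fhat ∪ G) \ {i}, ((mhatm i j : ℝ) : EReal))
    (hT : ∀ i, (i ∈ Fhat → T i = ξ i) ∧ (i ∉ Fhat → T i = max ((γ i : ℝ) : EReal) (ξ i)))
    (Z1F Z1PS Z1 Z2 : EReal)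
    (hZ1F : Z1F = ⨅ i ∈ Ohat, ((γ i : ℝ) : EReal))
    (hZ1PS : Z1PS = ⨅ i ∈ Ohat, ⨅ j ∈ Ohat \ {i}, ((Mhatm i j : ℝ) : EReal))
    (hZ1 : Z1 = min Z1F Z1PS)
    (hZ2 : Z2 = ⨅ i ∈ Ohatᶜ, T i)
    (hnotstop : Z1 < 0 ∨ Z2 < 0)
    (b c : Fin K)
    (hb1 : Z2 < 0 → b ∉ Ohat ∧ T b = Z2)
    (hb2 : 0 ≤ Z2 → Z1F ≤ Z1PS → b ∈ Ohat ∧ ((γ b : ℝ) : EReal) = Z1F)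
    (hb3 : 0 ≤ Z2 → Z1PS < Z1F → b ∈ Ohat ∧
      (⨅ j ∈ Ohat \ {b}, ((Mhatm b j : ℝ) : EReal)) = Z1PS)
    (hFG : ((Fhat ∪ G) \ {b}).Nonempty)
    (hc1 : c ∈ (Fhat ∪ G) \ {b})
    (hc2 : ∀ j ∈ (Fhat ∪ G) \ {b}, Mhatm b c ≤ Mhatm b j)
    (S I : Set (Fin K)) (hSI : ValidAnswer P μ S I)
    (hbc : b ∈ I ∨ c ∈ I) :
    (b ∈ I ∧ etaD P (μ b) ≤ 2 * U b) ∨ (c ∈ I ∧ etaD P (μ c) ≤ 2 * U c) := by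
  have key : ∀ i : Fin K, i ∈ I → i ∈ Fhat ∪ G → etaD P (μ i) ≤ 2 * U i := by
    intro i hiI hiFG
    have hμnot : μ i ∉ P := hSI.2.1 hiI
    have hNpos : (0:ℝ) < (N i : ℝ) := by exact_mod_cast hN i
    have hUpos : 0 < U i := by
      rw [hU]; positivity
    have hdist : dist (μ i) (μhat i) < U i := by
      rw [dist_comm, dist_eq_norm]; exact hconf2 i
    have hinf : infDist (μhat i) P < U i := by
      rcases hiFG with h | h
      · rw [hFhat] at h
        simpa [infDist_zero_of_mem (show μhat i ∈ P from h)] using hUpos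
      · rw [hG] at h
        obtain ⟨hnot, hγneg⟩ := h
        have hμhatnot : μhat i ∉ P := by rw [hFhat] at hnot; exact hnot
        have hηeq : ηhat i = infDist (μhat i) P := by
          rw [hηhat, etaD, if_neg hμhatnot]
        have hηnn : 0 ≤ ηhat i := hηeq ▸ infDist_nonneg
        have hγi := hγ i
        rw [hγi] at hγneg
        have hsq : (ηhat i) ^ 2 < (U i) ^ 2 := by
          have hU2 : (U i) ^ 2 = 2 * g * σu ^ 2 / (N i : ℝ) := by
            rw [hU, mul_pow, Real.sq_sqrt (by positivity)]; ring
          have h1 : (N i : ℝ) * (ηhat i) ^ 2 / (2 * σu ^ 2) < g := by linarith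
          have h2 : (N i : ℝ) * (ηhat i) ^ 2 < g * (2 * σu ^ 2) := by
            have := (div_lt_iff₀ (by positivity)).mp h1
            linarith
          rw [hU2, lt_div_iff₀ hNpos]
          nlinarith
        have : ηhat i < U i := lt_of_pow_lt_pow_left₀ 2 hUpos.le hsq
        rwa [hηeq] at this
    have htri : infDist (μ i) P ≤ infDist (μhat i) P + dist (μ i) (μhat i) :=
      infDist_le_infDist_add_dist
    rw [etaD, if_neg hμnot]
    linarith
  have hcFG : c ∈ Fhat ∪ G := hc1.1
  have hbFG : b ∈ Fhat ∪ G := by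
    by_cases hz2 : Z2 < 0
    · obtain ⟨hbO, hTb⟩ := hb1 hz2
      by_cases hbF : b ∈ Fhat
      · exact Or.inl hbF
      · right
        rw [hG]
        refine ⟨hbF, ?_⟩
        have hT2 := (hT b).2 hbF
        have hlt : ((γ b : ℝ) : EReal) < 0 := by
          calc ((γ b : ℝ) : EReal) ≤ max ((γ b : ℝ) : EReal) (ξ b) := le_max_left _ _
            _ = T b := hT2.symm
            _ = Z2 := hTb
            _ < 0 := hz2
        exact_mod_cast hlt
    · push_neg at hz2
      rcases le_or_gt Z1F Z1PS with h | h
      · have hbO := (hb2 hz2 h).1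
        rw [hOhat] at hbO
        left; rw [hFhat]; exact hbO.1
      · have hbO := (hb3 hz2 h).1
        rw [hOhat] at hbO
        left; rw [hFhat]; exact hbO.1
  rcases hbc with hbI | hcI
  · exact Or.inl ⟨hbI, key b hbI hbFG⟩
  · exact Or.inr ⟨hcI, key c hcI hcFG⟩
end
end

section
/- If c ∈ S, then {b, c} ∩ W(S,I) ≠ ∅; that is, at least one of the leader b and the challenger c is under-explored with respect to the valid answer (S,I). -/
noncomputable section
open scoped Classical
open Metric Set

private lemma fin_sup_spec {d : ℕ} (hd : 0 < d) (f : Fin d → ℝ) :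
    (∀ a, f a ≤ ⨆ a, f a) ∧ ∃ a, (⨆ a, f a) = f a := by
  haveI : Nonempty (Fin d) := ⟨⟨0, hd⟩⟩
  have hb : BddAbove (Set.range f) := (Set.finite_range f).bddAbove
  obtain ⟨a, ha⟩ := Finite.exists_max f
  exact ⟨fun a => le_ciSup hb a, a, le_antisymm (ciSup_le ha) (le_ciSup hb a)⟩

private lemma fin_inf_spec {d : ℕ} (hd : 0 < d) (f : Fin d → ℝ) :
    (∀ a, (⨅ a, f a) ≤ f a) ∧ ∃ a, (⨅ a, f a) = f a := by
  haveI : Nonempty (Fin d) := ⟨⟨0, hd⟩⟩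
  have hb : BddBelow (Set.range f) := (Set.finite_range f).bddBelow
  obtain ⟨a, ha⟩ := Finite.exists_min f
  exact ⟨fun a => ciInf_le hb a, a, le_antisymm (ciInf_le hb a) (le_ciInf ha)⟩

private lemma gamma_sign {n : ℕ} (hn : 0 < n) {σu g η Uv γv : ℝ} (hσu : 0 < σu) (hg : 0 < g)
    (hUv : Uv = σu * Real.sqrt (2 * g / (n : ℝ)))
    (hγv : γv = (n : ℝ) * η ^ 2 / (2 * σu ^ 2) - g) (hη : 0 ≤ η) :
    (η < Uv → γv < 0) ∧ (Uv < η → 0 < γv) := by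
  have hn' : (0 : ℝ) < n := by exact_mod_cast hn
  have hUpos : 0 < Uv := by
    rw [hUv]; positivity
  have key : Uv ^ 2 * n = 2 * σu ^ 2 * g := by
    rw [hUv, mul_pow, Real.sq_sqrt (by positivity)]
    field_simp
  constructor
  · intro h
    have hsq : η ^ 2 < Uv ^ 2 := by nlinarith
    rw [hγv, sub_neg, div_lt_iff₀ (by positivity : (0:ℝ) < 2 * σu ^ 2)]
    nlinarith [mul_pos hn' (sub_pos.mpr hsq)]
  · intro h
    have hsq : Uv ^ 2 < η ^ 2 := by nlinarith
    rw [hγv, sub_pos, lt_div_iff₀ (by positivity : (0:ℝ) < 2 * σu ^ 2)]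
    nlinarith [mul_pos hn' (sub_pos.mpr hsq)]

/-- if the challenger `c` lies in `S`, then the leader `b` or the
challenger `c` is under-explored with respect to the valid answer `(S, I)`. -/
theorem stmt10 {K d m : ℕ} (hK : 0 < K) (hd : 0 < d) (hm : 0 < m)
    (A : Fin m → Fin d → ℝ) (bvec : Fin m → ℝ)
    (P : Set (Evec d)) (hPdef : P = PolySet A bvec)
    (μ μhat : Fin K → Evec d)
    (N : Fin K → ℕ) (hN : ∀ i, 1 ≤ N i)
    (σ σu f g : ℝ) (hσ : 0 < σ) (hσu : 0 < σu) (hf : 0 < f) (hg : 0 < g)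
    (β U : Fin K → ℝ)
    (hβ : ∀ i, β i = σ * Real.sqrt (2 * f / (N i : ℝ)))
    (hU : ∀ i, U i = σu * Real.sqrt (2 * g / (N i : ℝ)))
    (hconf1 : ∀ i, ∀ c, |μhat i c - μ i c| < β i)
    (hconf2 : ∀ i, ‖μhat i - μ i‖ < U i)
    (Fhat Ohat G : Set (Fin K)) (ηhat γ : Fin K → ℝ)
    (hFhat : Fhat = FeasSet P μhat)
    (hOhat : Ohat = OptSet P μhat)
    (hηhat : ∀ i, ηhat i = etaD P (μhat i))
    (hγ : ∀ i, γ i = (N i : ℝ) * (ηhat i) ^ 2 / (2 * σu ^ 2) - g)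
    (hG : G = {i | i ∉ Fhat ∧ γ i < 0})
    (Mhatm mhatm : Fin K → Fin K → ℝ)
    (hMhatm : ∀ i j, Mhatm i j = bigM μhat i j - (β i + β j))
    (hmhatm : ∀ i j, mhatm i j = smallm μhat i j - (β i + β j))
    (ξ T : Fin K → EReal)
    (hξ : ∀ i, ξ i = ⨆ j ∈ (Fhat ∪ G) \ {i}, ((mhatm i j : ℝ) : EReal))
    (hT : ∀ i, (i ∈ Fhat → T i = ξ i) ∧ (i ∉ Fhat → T i = max ((γ i : ℝ) : EReal) (ξ i)))
    (Z1F Z1PS Z1 Z2 : EReal)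
    (hZ1F : Z1F = ⨅ i ∈ Ohat, ((γ i : ℝ) : EReal))
    (hZ1PS : Z1PS = ⨅ i ∈ Ohat, ⨅ j ∈ Ohat \ {i}, ((Mhatm i j : ℝ) : EReal))
    (hZ1 : Z1 = min Z1F Z1PS)
    (hZ2 : Z2 = ⨅ i ∈ Ohatᶜ, T i)
    (hnotstop : Z1 < 0 ∨ Z2 < 0)
    (b c : Fin K)
    (hb1 : Z2 < 0 → b ∉ Ohat ∧ T b = Z2)
    (hb2 : 0 ≤ Z2 → Z1F ≤ Z1PS → b ∈ Ohat ∧ ((γ b : ℝ) : EReal) = Z1F)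
    (hb3 : 0 ≤ Z2 → Z1PS < Z1F → b ∈ Ohat ∧
      (⨅ j ∈ Ohat \ {b}, ((Mhatm b j : ℝ) : EReal)) = Z1PS)
    (hFG : ((Fhat ∪ G) \ {b}).Nonempty)
    (hc1 : c ∈ (Fhat ∪ G) \ {b})
    (hc2 : ∀ j ∈ (Fhat ∪ G) \ {b}, Mhatm b c ≤ Mhatm b j)
    (S I : Set (Fin K)) (hSI : ValidAnswer P μ S I)
    (hcS : c ∈ S) :
    b ∈ Wunder P μ S I β U ∨ c ∈ Wunder P μ S I β U := by
  by_contra hcon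
  push_neg at hcon
  obtain ⟨hbW, hcW⟩ := hcon
  haveI : Nonempty (Fin d) := ⟨⟨0, hd⟩⟩
  have a0 : Fin d := ⟨0, hd⟩
  have hβpos : ∀ i, 0 < β i := by
    intro i
    have hNi : (0:ℝ) < (N i : ℝ) := by exact_mod_cast (hN i)
    rw [hβ i]; positivity
  have hUpos : ∀ i, 0 < U i := by
    intro i
    have hNi : (0:ℝ) < (N i : ℝ) := by exact_mod_cast (hN i)
    rw [hU i]; positivity
  -- sup/inf specs
  have hbigM_spec : ∀ (ν : Fin K → Evec d) (i j : Fin K),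
      (∀ a, ν i a - ν j a ≤ bigM ν i j) ∧ ∃ a, bigM ν i j = ν i a - ν j a := by
    intro ν i j
    simpa [bigM] using fin_sup_spec hd (fun a => ν i a - ν j a)
  have hsmallm_spec : ∀ (ν : Fin K → Evec d) (i j : Fin K),
      (∀ a, smallm ν i j ≤ ν j a - ν i a) ∧ ∃ a, smallm ν i j = ν j a - ν i a := by
    intro ν i j
    simpa [smallm] using fin_inf_spec hd (fun a => ν j a - ν i a)
  -- confidence transfer
  have hbig_lb : ∀ i j, bigM μ i j - (β i + β j) < bigM μhat i j := by
    intro i j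
    obtain ⟨a, ha⟩ := (hbigM_spec μ i j).2
    have h1 := (hbigM_spec μhat i j).1 a
    have e1 := abs_lt.mp (hconf1 i a)
    have e2 := abs_lt.mp (hconf1 j a)
    rw [ha]; linarith [e1.1, e1.2, e2.1, e2.2]
  have hsm_lb : ∀ i j, smallm μ i j - (β i + β j) < smallm μhat i j := by
    intro i j
    obtain ⟨a, ha⟩ := (hsmallm_spec μhat i j).2
    have h1 := (hsmallm_spec μ i j).1 a
    have e1 := abs_lt.mp (hconf1 i a)
    have e2 := abs_lt.mp (hconf1 j a)
    rw [ha]; linarith [e1.1, e1.2, e2.1, e2.2]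
  -- unfold non-membership in W
  simp only [Wunder, Set.mem_union, Set.mem_setOf_eq, not_or] at hbW hcW
  -- every truly optimal arm is in Fhat ∪ G
  have hmemFG : ∀ j : Fin K, μ j ∈ P → j ∈ Fhat ∪ G := by
    intro j hjP
    by_cases hjF : j ∈ Fhat
    · exact Or.inl hjF
    · refine Or.inr ?_
      rw [hG]
      refine ⟨hjF, ?_⟩
      have hnotP : μhat j ∉ P := by rw [hFhat] at hjF; exact hjF
      have h1 : etaD P (μhat j) ≤ dist (μhat j) (μ j) := by
        rw [etaD, if_neg hnotP]; exact Metric.infDist_le_dist_of_mem hjP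
      have h2 : dist (μhat j) (μ j) < U j := by
        rw [dist_eq_norm]; exact hconf2 j
      have h3 : ηhat j < U j := by rw [hηhat]; linarith
      have hηnn : 0 ≤ ηhat j := by
        rw [hηhat, etaD, if_neg hnotP]; exact Metric.infDist_nonneg
      exact (gamma_sign (hN j) hσu hg (hU j) (hγ j) hηnn).1 h3
  -- Lemma A : dichotomy
  have dichot : ∀ j, j ∈ OptSet P μ → 4 * β c < smallm μ c j → j = b := by
    intro j hj hgap
    by_contra hjb
    have hjFG : j ∈ (Fhat ∪ G) \ {b} := ⟨hmemFG j hj.1, by simpa using hjb⟩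
    have hchal := hc2 j hjFG
    obtain ⟨a, ha⟩ := (hbigM_spec μhat b j).2
    have h1a := (hsmallm_spec μhat c j).1 a
    have h1b := (hbigM_spec μhat b c).1 a
    have h2 := hsm_lb c j
    rw [hMhatm, hMhatm] at hchal
    have hcc := hβpos c
    linarith
  -- c is not truly optimal
  have hcO : c ∉ OptSet P μ := by
    intro hcO
    obtain ⟨j, hjP, hdom⟩ := hSI.1 hcS
    exact hcO.2 j hjP hdom
  -- extract Δ_c(S) > 4 β_c and its witness, which must be b
  have hgapc : ((4 * β c : ℝ) : EReal) < pGap P μ S c := by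
    have h := hcW.2
    push_neg at h
    exact h hcS
  rw [pGap, if_neg hcO] at hgapc
  have hsubext : ∀ (x : ℝ) (i : Fin K), ((x : ℝ) : EReal) < pGapSub P μ i →
      ∃ j, j ∈ OptSet P μ ∧ x < smallm μ i j := by
    intro x i h
    rw [pGapSub, lt_iSup_iff] at h
    obtain ⟨j, hj⟩ := h
    rw [lt_iSup_iff] at hj
    obtain ⟨hjO, hx⟩ := hj
    exact ⟨j, hjO, EReal.coe_lt_coe_iff.mp hx⟩
  obtain ⟨j0, hj0O, hj0gap⟩ := hsubext (4 * β c) c hgapc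
  have hj0b := dichot j0 hj0O hj0gap
  rw [hj0b] at hj0O hj0gap
  -- so b is truly optimal and m(c,b) > 4 β_c
  have hbO : b ∈ OptSet P μ := hj0O
  have hmcb : 4 * β c < smallm μ c b := hj0gap
  -- exploit b ∉ W
  have hW1 := hbW.1
  push_neg at hW1
  obtain ⟨hgapb, hetab⟩ := hW1.1 hbO
  have hμbP : μ b ∈ P := hbO.1
  rw [etaD, if_pos hμbP] at hetab
  have hbF : b ∈ Fhat := by
    rw [hFhat]
    by_contra hnot
    have hnotP : μhat b ∉ P := hnot
    have h1 : infDist (μ b) Pᶜ ≤ dist (μ b) (μhat b) :=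
      Metric.infDist_le_dist_of_mem hnotP
    have h2 : dist (μ b) (μhat b) < U b := by
      rw [dist_comm, dist_eq_norm]; exact hconf2 b
    linarith [hUpos b]
  have hμhatbP : μhat b ∈ P := by rw [hFhat] at hbF; exact hbF
  have hηb : U b < ηhat b := by
    rw [hηhat, etaD, if_pos hμhatbP]
    have h1 : infDist (μ b) Pᶜ ≤ infDist (μhat b) Pᶜ + dist (μ b) (μhat b) :=
      Metric.infDist_le_infDist_add_dist
    have h2 : dist (μ b) (μhat b) < U b := by
      rw [dist_comm, dist_eq_norm]; exact hconf2 b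
    linarith
  have hηbnn : 0 ≤ ηhat b := le_of_lt (lt_trans (hUpos b) hηb)
  have hγbpos : 0 < γ b := (gamma_sign (hN b) hσu hg (hU b) (hγ b) hηbnn).2 hηb
  -- pGap at b > 4 β_b; use the term at c
  rw [pGap, if_pos hbO, lt_min_iff] at hgapb
  have hterm : ((4 * β b : ℝ) : EReal) <
      ((max (bigM μ c b) 0 : ℝ) : EReal) + pGapSub P μ c :=
    lt_of_lt_of_le hgapb.2 (iInf₂_le c hcS)
  have hbigcb : bigM μ c b ≤ 0 := by
    obtain ⟨a, ha⟩ := (hbigM_spec μ c b).2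
    have h1 := (hsmallm_spec μ c b).1 a
    rw [ha]; linarith [hβpos c]
  rw [max_eq_right hbigcb, EReal.coe_zero, zero_add] at hterm
  obtain ⟨j', hj'O, hj'gap⟩ := hsubext (4 * β b) c hterm
  -- key contradiction machine
  have hkey : ∀ jh, jh ∈ Fhat ∪ G → jh ≠ b → Mhatm b jh < 0 → False := by
    intro jh hjh hne hneg
    have hchal := hc2 jh ⟨hjh, by simpa using hne⟩
    have hMbcneg : Mhatm b c < 0 := lt_of_le_of_lt hchal hneg
    have hlb : smallm μ c b - 2 * (β b + β c) < Mhatm b c := by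
      rw [hMhatm]
      have h1 := hbig_lb b c
      have h2 : smallm μ c b ≤ bigM μ b c := by
        calc smallm μ c b ≤ μ b a0 - μ c a0 := (hsmallm_spec μ c b).1 a0
          _ ≤ bigM μ b c := (hbigM_spec μ b c).1 a0
      linarith
    have hβbc : β c < β b := by linarith
    have h4b : 4 * β c < smallm μ c j' := by linarith
    have hj'b := dichot j' hj'O h4b
    rw [hj'b] at hj'gap
    linarith
  -- case analysis on leader selection
  rcases lt_or_ge Z2 0 with h2neg | h2pos
  · obtain ⟨hbnO, hTb⟩ := hb1 h2neg
    have hex : ∃ jh, μhat jh ∈ P ∧ Pdom (μhat b) (μhat jh) := by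
      rw [hOhat] at hbnO
      by_contra hno
      push_neg at hno
      exact hbnO ⟨hμhatbP, fun j hjP hd' => hno j hjP hd'⟩
    obtain ⟨jh, hjhP, hdom⟩ := hex
    have hne : jh ≠ b := by
      rintro rfl
      exact hdom.2 rfl
    have hMle : bigM μhat b jh ≤ 0 := by
      obtain ⟨a, ha⟩ := (hbigM_spec μhat b jh).2
      have := hdom.1 a
      rw [ha]; linarith
    have hMneg : Mhatm b jh < 0 := by
      rw [hMhatm]; linarith [hβpos b, hβpos jh]
    exact hkey jh (Or.inl (by rw [hFhat]; exact hjhP)) hne hMneg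
  · have hZ1neg : Z1 < 0 := hnotstop.resolve_right (not_lt.mpr h2pos)
    rcases le_or_gt Z1F Z1PS with hle | hlt
    · obtain ⟨hbO', hγb⟩ := hb2 h2pos hle
      have h1 : ((γ b : ℝ) : EReal) < 0 := by
        rw [hγb]
        calc Z1F = min Z1F Z1PS := (min_eq_left hle).symm
          _ = Z1 := hZ1.symm
          _ < 0 := hZ1neg
      have h2 : γ b < 0 := by exact_mod_cast h1
      linarith
    · obtain ⟨hbO', hinf⟩ := hb3 h2pos hlt
      have hI' : (⨅ j ∈ Ohat \ {b}, ((Mhatm b j : ℝ) : EReal)) < 0 := by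
        rw [hinf]
        calc Z1PS = min Z1F Z1PS := (min_eq_right hlt.le).symm
          _ = Z1 := hZ1.symm
          _ < 0 := hZ1neg
      rw [iInf_lt_iff] at hI'
      obtain ⟨jh, hI'⟩ := hI'
      rw [iInf_lt_iff] at hI'
      obtain ⟨hjh, hI'⟩ := hI'
      have hMneg : Mhatm b jh < 0 := by exact_mod_cast hI'
      have hjhF : jh ∈ Fhat := by
        rw [hFhat]
        have : jh ∈ OptSet P μhat := by rw [hOhat] at hjh; exact hjh.1
        exact this.1
      exact hkey jh (Or.inl hjhF) (by simpa using hjh.2) hMneg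
end
end

section
/- If b ∈ O* and c ∈ O*, then {b, c} ∩ W(S,I) ≠ ∅; that is, at least one of the leader b and the challenger c is under-explored with respect to the valid answer (S,I). -/
noncomputable section
open scoped Classical
open Metric Set

lemma ciSup_lower_aux {d : ℕ} (hd : 0 < d) (f g : Fin d → ℝ) (ε : ℝ)
    (h : ∀ x, f x - ε < g x) : (⨆ x, f x) - ε < ⨆ x, g x := by
  haveI : Nonempty (Fin d) := Fin.pos_iff_nonempty.mp hd
  obtain ⟨x0, hx0⟩ := Finite.exists_max f
  have h1 : (⨆ x, f x) ≤ f x0 := ciSup_le hx0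
  have h2 : g x0 ≤ ⨆ x, g x := le_ciSup (Set.Finite.bddAbove (Set.finite_range g)) x0
  linarith [h x0]

lemma exists_pos_of_ciSup_pos_aux {d : ℕ} (hd : 0 < d) (g : Fin d → ℝ)
    (h : 0 < ⨆ x, g x) : ∃ x, 0 < g x := by
  haveI : Nonempty (Fin d) := Fin.pos_iff_nonempty.mp hd
  by_contra hc
  push_neg at hc
  exact absurd (ciSup_le hc) (not_le.mpr h)

/-- if both the leader `b` and the challenger `c` lie in `O*`, then one
of them is under-explored with respect to the valid answer `(S, I)`. -/
theorem stmt11 {K d m : ℕ} (hK : 0 < K) (hd : 0 < d) (hm : 0 < m)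
    (A : Fin m → Fin d → ℝ) (bvec : Fin m → ℝ)
    (P : Set (Evec d)) (hPdef : P = PolySet A bvec)
    (μ μhat : Fin K → Evec d)
    (N : Fin K → ℕ) (hN : ∀ i, 1 ≤ N i)
    (σ σu f g : ℝ) (hσ : 0 < σ) (hσu : 0 < σu) (hf : 0 < f) (hg : 0 < g)
    (β U : Fin K → ℝ)
    (hβ : ∀ i, β i = σ * Real.sqrt (2 * f / (N i : ℝ)))
    (hU : ∀ i, U i = σu * Real.sqrt (2 * g / (N i : ℝ)))
    (hconf1 : ∀ i, ∀ c, |μhat i c - μ i c| < β i)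
    (hconf2 : ∀ i, ‖μhat i - μ i‖ < U i)
    (Fhat Ohat G : Set (Fin K)) (ηhat γ : Fin K → ℝ)
    (hFhat : Fhat = FeasSet P μhat)
    (hOhat : Ohat = OptSet P μhat)
    (hηhat : ∀ i, ηhat i = etaD P (μhat i))
    (hγ : ∀ i, γ i = (N i : ℝ) * (ηhat i) ^ 2 / (2 * σu ^ 2) - g)
    (hG : G = {i | i ∉ Fhat ∧ γ i < 0})
    (Mhatm mhatm : Fin K → Fin K → ℝ)
    (hMhatm : ∀ i j, Mhatm i j = bigM μhat i j - (β i + β j))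
    (hmhatm : ∀ i j, mhatm i j = smallm μhat i j - (β i + β j))
    (ξ T : Fin K → EReal)
    (hξ : ∀ i, ξ i = ⨆ j ∈ (Fhat ∪ G) \ {i}, ((mhatm i j : ℝ) : EReal))
    (hT : ∀ i, (i ∈ Fhat → T i = ξ i) ∧ (i ∉ Fhat → T i = max ((γ i : ℝ) : EReal) (ξ i)))
    (Z1F Z1PS Z1 Z2 : EReal)
    (hZ1F : Z1F = ⨅ i ∈ Ohat, ((γ i : ℝ) : EReal))
    (hZ1PS : Z1PS = ⨅ i ∈ Ohat, ⨅ j ∈ Ohat \ {i}, ((Mhatm i j : ℝ) : EReal))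
    (hZ1 : Z1 = min Z1F Z1PS)
    (hZ2 : Z2 = ⨅ i ∈ Ohatᶜ, T i)
    (hnotstop : Z1 < 0 ∨ Z2 < 0)
    (b c : Fin K)
    (hb1 : Z2 < 0 → b ∉ Ohat ∧ T b = Z2)
    (hb2 : 0 ≤ Z2 → Z1F ≤ Z1PS → b ∈ Ohat ∧ ((γ b : ℝ) : EReal) = Z1F)
    (hb3 : 0 ≤ Z2 → Z1PS < Z1F → b ∈ Ohat ∧
      (⨅ j ∈ Ohat \ {b}, ((Mhatm b j : ℝ) : EReal)) = Z1PS)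
    (hFG : ((Fhat ∪ G) \ {b}).Nonempty)
    (hc1 : c ∈ (Fhat ∪ G) \ {b})
    (hc2 : ∀ j ∈ (Fhat ∪ G) \ {b}, Mhatm b c ≤ Mhatm b j)
    (S I : Set (Fin K)) (hSI : ValidAnswer P μ S I)
    (hbO : b ∈ OptSet P μ) (hcO : c ∈ OptSet P μ) :
    b ∈ Wunder P μ S I β U ∨ c ∈ Wunder P μ S I β U := by
  by_contra hcon
  push_neg at hcon
  obtain ⟨hbW, hcW⟩ := hcon
  have hNpos : ∀ i, (0:ℝ) < (N i : ℝ) := fun i => by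
    exact_mod_cast Nat.lt_of_lt_of_le Nat.zero_lt_one (hN i)
  have hβpos : ∀ i, 0 < β i := fun i => by
    rw [hβ]; exact mul_pos hσ (Real.sqrt_pos.mpr (by have := hNpos i; positivity))
  have hUpos : ∀ i, 0 < U i := fun i => by
    rw [hU]; exact mul_pos hσu (Real.sqrt_pos.mpr (by have := hNpos i; positivity))
  have hbW1 : ¬ (pGap P μ S b ≤ ((4 * β b : ℝ) : EReal) ∨ etaD P (μ b) ≤ 2 * U b) := by
    intro h; exact hbW (Set.mem_union_left _ (Set.mem_union_left _ ⟨hbO, h⟩))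
  have hcW1 : ¬ (pGap P μ S c ≤ ((4 * β c : ℝ) : EReal) ∨ etaD P (μ c) ≤ 2 * U c) := by
    intro h; exact hcW (Set.mem_union_left _ (Set.mem_union_left _ ⟨hcO, h⟩))
  push_neg at hbW1 hcW1
  obtain ⟨hgapb, hetab⟩ := hbW1
  obtain ⟨hgapc, _⟩ := hcW1
  have hcb : c ≠ b := fun h => hc1.2 (Set.mem_singleton_iff.mpr h)
  -- gap facts
  rw [pGap, if_pos hbO, lt_min_iff] at hgapb
  have hb2' := hgapb.1.trans_le
    (iInf₂_le c ⟨hcO, fun h => hcb (Set.mem_singleton_iff.mp h)⟩)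
  rw [EReal.coe_lt_coe_iff, lt_min_iff] at hb2'
  rw [pGap, if_pos hcO, lt_min_iff] at hgapc
  have hc2' := hgapc.1.trans_le
    (iInf₂_le b ⟨hbO, fun h => hcb (Set.mem_singleton_iff.mp h).symm⟩)
  rw [EReal.coe_lt_coe_iff, lt_min_iff] at hc2'
  -- Mhatm b c > 0
  have hlow : bigM μ b c - (β b + β c) < bigM μhat b c := by
    simp only [bigM]
    refine ciSup_lower_aux hd _ _ _ (fun x => ?_)
    have h1 := abs_lt.mp (hconf1 b x)
    have h2 := abs_lt.mp (hconf1 c x)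
    linarith [h1.1, h1.2, h2.1, h2.2]
  have hMbc : 0 < Mhatm b c := by
    rw [hMhatm]
    have := hb2'.1; have := hc2'.2
    have := hβpos b; have := hβpos c
    linarith
  -- feasibility facts for b
  have hetab' : 2 * U b < infDist (μ b) Pᶜ := by
    rw [etaD, if_pos hbO.1] at hetab; exact hetab
  have hdistb : dist (μ b) (μhat b) < U b := by
    rw [dist_eq_norm']; exact hconf2 b
  have hinfb : U b < infDist (μhat b) Pᶜ := by
    have h := infDist_le_infDist_add_dist (x := μ b) (y := μhat b) (s := Pᶜ)
    linarith
  have hμbP : μhat b ∈ P := by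
    by_contra hmem
    have : infDist (μhat b) Pᶜ = 0 := infDist_zero_of_mem hmem
    linarith [hUpos b]
  have hγb : 0 < γ b := by
    have hηb : U b < ηhat b := by rw [hηhat, etaD, if_pos hμbP]; exact hinfb
    have hU2 : (U b)^2 = σu^2 * (2*g/(N b:ℝ)) := by
      rw [hU, mul_pow, Real.sq_sqrt (by have := hNpos b; positivity)]
    rw [hγ]
    have hNb := hNpos b
    have hσu2 : (0:ℝ) < σu^2 := by positivity
    have hUb := hUpos b
    rw [sub_pos, lt_div_iff₀ (by positivity)]
    have h3 : (U b)^2 < (ηhat b)^2 := by nlinarith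
    have h4 : (N b:ℝ) * (U b)^2 = σu^2 * (2*g) := by
      rw [hU2]; field_simp
    nlinarith [mul_lt_mul_of_pos_left h3 hNb]
  -- b is in Ohat
  have hbOhat : b ∈ Ohat := by
    rw [hOhat]
    refine ⟨hμbP, fun j hjP hdom => ?_⟩
    by_cases hjb : j = b
    · subst hjb; exact hdom.2 rfl
    · have hjmem : j ∈ (Fhat ∪ G) \ {b} :=
        ⟨Or.inl (by rw [hFhat]; exact hjP), by simp [hjb]⟩
      have hMj : 0 < Mhatm b j := lt_of_lt_of_le hMbc (hc2 j hjmem)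
      rw [hMhatm] at hMj
      have hpos : 0 < ⨆ x, (μhat b x - μhat j x) := by
        have := hβpos b; have := hβpos j
        simp only [bigM] at hMj
        linarith
      obtain ⟨x, hx⟩ := exists_pos_of_ciSup_pos_aux hd _ hpos
      exact absurd (hdom.1 x) (not_le.mpr (by linarith))
  -- case analysis
  rcases lt_or_ge Z2 0 with hZ2neg | hZ2nn
  · exact (hb1 hZ2neg).1 hbOhat
  · have hZ1neg : Z1 < 0 := hnotstop.resolve_right (not_lt.mpr hZ2nn)
    rcases le_or_gt Z1F Z1PS with hle | hlt
    · obtain ⟨_, hγeq⟩ := hb2 hZ2nn hle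
      have hF : Z1F < 0 := by rw [hZ1, min_eq_left hle] at hZ1neg; exact hZ1neg
      rw [← hγeq] at hF
      have : γ b < 0 := by exact_mod_cast hF
      linarith
    · obtain ⟨_, hinf⟩ := hb3 hZ2nn hlt
      have hZ1PSneg : Z1PS < 0 := by rw [hZ1, min_eq_right hlt.le] at hZ1neg; exact hZ1neg
      rw [← hinf] at hZ1PSneg
      obtain ⟨j, hj⟩ := iInf_lt_iff.mp hZ1PSneg
      obtain ⟨hjmem, hjlt⟩ := iInf_lt_iff.mp hj
      have hjO : j ∈ OptSet P μhat := hOhat ▸ hjmem.1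
      have hjb : j ≠ b := fun h => hjmem.2 (Set.mem_singleton_iff.mpr h)
      have hjmem' : j ∈ (Fhat ∪ G) \ {b} :=
        ⟨Or.inl (by rw [hFhat]; exact hjO.1), by simp [hjb]⟩
      have hle2 := hc2 j hjmem'
      have hjlt' : Mhatm b j < 0 := by exact_mod_cast hjlt
      linarith
end
end

section
/- If b ∈ S and c ∈ O*, then {b, c} ∩ W(S,I) ≠ ∅; that is, at least one of the leader b and the challenger c is under-explored with respect to the valid answer (S,I). -/
noncomputable section
open scoped Classical
open Metric Set

/-- if the leader `b` lies in `S` and the challenger `c` lies in `O*`,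
then one of them is under-explored with respect to the valid answer `(S, I)`. -/
theorem stmt12 {K d m : ℕ} (hK : 0 < K) (hd : 0 < d) (hm : 0 < m)
    (A : Fin m → Fin d → ℝ) (bvec : Fin m → ℝ)
    (P : Set (Evec d)) (hPdef : P = PolySet A bvec)
    (μ μhat : Fin K → Evec d)
    (N : Fin K → ℕ) (hN : ∀ i, 1 ≤ N i)
    (σ σu f g : ℝ) (hσ : 0 < σ) (hσu : 0 < σu) (hf : 0 < f) (hg : 0 < g)
    (β U : Fin K → ℝ)
    (hβ : ∀ i, β i = σ * Real.sqrt (2 * f / (N i : ℝ)))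
    (hU : ∀ i, U i = σu * Real.sqrt (2 * g / (N i : ℝ)))
    (hconf1 : ∀ i, ∀ c, |μhat i c - μ i c| < β i)
    (hconf2 : ∀ i, ‖μhat i - μ i‖ < U i)
    (Fhat Ohat G : Set (Fin K)) (ηhat γ : Fin K → ℝ)
    (hFhat : Fhat = FeasSet P μhat)
    (hOhat : Ohat = OptSet P μhat)
    (hηhat : ∀ i, ηhat i = etaD P (μhat i))
    (hγ : ∀ i, γ i = (N i : ℝ) * (ηhat i) ^ 2 / (2 * σu ^ 2) - g)
    (hG : G = {i | i ∉ Fhat ∧ γ i < 0})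
    (Mhatm mhatm : Fin K → Fin K → ℝ)
    (hMhatm : ∀ i j, Mhatm i j = bigM μhat i j - (β i + β j))
    (hmhatm : ∀ i j, mhatm i j = smallm μhat i j - (β i + β j))
    (ξ T : Fin K → EReal)
    (hξ : ∀ i, ξ i = ⨆ j ∈ (Fhat ∪ G) \ {i}, ((mhatm i j : ℝ) : EReal))
    (hT : ∀ i, (i ∈ Fhat → T i = ξ i) ∧ (i ∉ Fhat → T i = max ((γ i : ℝ) : EReal) (ξ i)))
    (Z1F Z1PS Z1 Z2 : EReal)
    (hZ1F : Z1F = ⨅ i ∈ Ohat, ((γ i : ℝ) : EReal))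
    (hZ1PS : Z1PS = ⨅ i ∈ Ohat, ⨅ j ∈ Ohat \ {i}, ((Mhatm i j : ℝ) : EReal))
    (hZ1 : Z1 = min Z1F Z1PS)
    (hZ2 : Z2 = ⨅ i ∈ Ohatᶜ, T i)
    (hnotstop : Z1 < 0 ∨ Z2 < 0)
    (b c : Fin K)
    (hb1 : Z2 < 0 → b ∉ Ohat ∧ T b = Z2)
    (hb2 : 0 ≤ Z2 → Z1F ≤ Z1PS → b ∈ Ohat ∧ ((γ b : ℝ) : EReal) = Z1F)
    (hb3 : 0 ≤ Z2 → Z1PS < Z1F → b ∈ Ohat ∧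
      (⨅ j ∈ Ohat \ {b}, ((Mhatm b j : ℝ) : EReal)) = Z1PS)
    (hFG : ((Fhat ∪ G) \ {b}).Nonempty)
    (hc1 : c ∈ (Fhat ∪ G) \ {b})
    (hc2 : ∀ j ∈ (Fhat ∪ G) \ {b}, Mhatm b c ≤ Mhatm b j)
    (S I : Set (Fin K)) (hSI : ValidAnswer P μ S I)
    (hbS : b ∈ S) (hcO : c ∈ OptSet P μ) :
    b ∈ Wunder P μ S I β U ∨ c ∈ Wunder P μ S I β U := by

  by_contra hcon
  push_neg at hcon
  obtain ⟨hbW, hcW⟩ := hcon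
  have hdne : Nonempty (Fin d) := ⟨⟨0, hd⟩⟩
  have hNpos : ∀ i, (0:ℝ) < (N i : ℝ) := fun i => by exact_mod_cast hN i
  have hβpos : ∀ i, 0 < β i := by
    intro i; rw [hβ i]
    exact mul_pos hσ (Real.sqrt_pos.mpr (div_pos (by linarith) (hNpos i)))
  have hUpos : ∀ i, 0 < U i := by
    intro i; rw [hU i]
    exact mul_pos hσu (Real.sqrt_pos.mpr (div_pos (by linarith) (hNpos i)))
  -- confidence bounds on bigM and smallm
  have hbigM_ub : ∀ i j, bigM μ i j ≤ bigM μhat i j + (β i + β j) := by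
    intro i j
    unfold bigM
    apply ciSup_le
    intro x
    have h1 := abs_lt.mp (hconf1 i x)
    have h2 := abs_lt.mp (hconf1 j x)
    have h3 : μhat i x - μhat j x ≤ ⨆ y, (μhat i y - μhat j y) :=
      le_ciSup (f := fun y => μhat i y - μhat j y)
        (Set.Finite.bddAbove (Set.finite_range _)) x
    linarith [h1.1, h1.2, h2.1, h2.2]
  have hsm : ∀ i j, smallm μ i j ≤ (β i + β j) - bigM μhat i j := by
    intro i j
    have hkey : bigM μhat i j ≤ (β i + β j) - smallm μ i j := by
      unfold bigM
      apply ciSup_le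
      intro x
      have hsle : smallm μ i j ≤ μ j x - μ i x :=
        ciInf_le (Set.Finite.bddBelow (Set.finite_range _)) x
      have h1 := abs_lt.mp (hconf1 i x)
      have h2 := abs_lt.mp (hconf1 j x)
      linarith [h1.1, h1.2, h2.1, h2.2]
    linarith
  have hmm' : - smallm μhat b c ≤ bigM μhat b c := by
    obtain ⟨x0, hx0⟩ := Finite.exists_min (fun x => μhat c x - μhat b x)
    have h1 : μhat c x0 - μhat b x0 ≤ smallm μhat b c := le_ciInf fun x => hx0 x
    have h2 : μhat b x0 - μhat c x0 ≤ bigM μhat b c :=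
      le_ciSup (f := fun y => μhat b y - μhat c y)
        (Set.Finite.bddAbove (Set.finite_range _)) x0
    linarith
  -- b is not Pareto optimal
  have hbO : b ∉ OptSet P μ := by
    intro hb
    obtain ⟨j, hjP, hjd⟩ := hSI.1 hbS
    exact hb.2 j hjP hjd
  have hcF : μ c ∈ P := hcO.1
  -- extract the non-membership facts
  have hΔc' : ¬(pGap P μ S c ≤ ((4 * β c : ℝ) : EReal) ∨ etaD P (μ c) ≤ 2 * U c) :=
    fun h' => hcW (Or.inl (Or.inl ⟨hcO, h'⟩))
  push_neg at hΔc'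
  obtain ⟨hΔc, hηc⟩ := hΔc'
  have hΔb : ((4 * β b : ℝ) : EReal) < pGap P μ S b :=
    not_le.mp fun h => hbW (Or.inr ⟨hbS, h⟩)
  -- c is empirically feasible
  have hcFhat : μhat c ∈ P := by
    by_contra hnc
    have hetac : etaD P (μ c) = infDist (μ c) Pᶜ := by unfold etaD; rw [if_pos hcF]
    have hle : infDist (μ c) Pᶜ ≤ dist (μ c) (μhat c) :=
      infDist_le_dist_of_mem hnc
    have hd2 : dist (μ c) (μhat c) < U c := by
      rw [dist_comm, dist_eq_norm]; exact hconf2 c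
    rw [hetac] at hηc
    linarith [hUpos c]
  -- Pareto optimal arms are empirically feasible or in G
  have hOsub : ∀ j ∈ OptSet P μ, j ∈ Fhat ∪ G := by
    intro j hj
    by_cases hjF : j ∈ Fhat
    · exact Or.inl hjF
    · right
      rw [hG]
      refine ⟨hjF, ?_⟩
      have hjP : μ j ∈ P := hj.1
      have hjhat : μhat j ∉ P := by rwa [hFhat] at hjF
      have hη : ηhat j = infDist (μhat j) P := by
        rw [hηhat j]; unfold etaD; rw [if_neg hjhat]
      have hηlt : ηhat j < U j := by
        rw [hη]
        calc infDist (μhat j) P ≤ dist (μhat j) (μ j) := infDist_le_dist_of_mem hjP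
          _ < U j := by rw [dist_eq_norm]; exact hconf2 j
      have hηnn : 0 ≤ ηhat j := by rw [hη]; exact infDist_nonneg
      have hU2 : (U j) ^ 2 = σu ^ 2 * (2 * g / (N j : ℝ)) := by
        rw [hU j, mul_pow, Real.sq_sqrt (le_of_lt (div_pos (by linarith) (hNpos j)))]
      have hsq : ηhat j ^ 2 < (U j) ^ 2 := by nlinarith
      have h2σ : (0:ℝ) < 2 * σu ^ 2 := by positivity
      rw [hγ j, sub_neg, div_lt_iff₀ h2σ]
      have hNne : (N j : ℝ) ≠ 0 := ne_of_gt (hNpos j)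
      have heqn : (N j : ℝ) * (σu ^ 2 * (2 * g / (N j : ℝ))) = g * (2 * σu ^ 2) := by
        field_simp
      have h3 : (N j : ℝ) * ηhat j ^ 2 < (N j : ℝ) * (U j) ^ 2 :=
        mul_lt_mul_of_pos_left hsq (hNpos j)
      rw [hU2] at h3
      linarith
  -- key bound on the gap of b
  have hGapSub_b : pGapSub P μ b ≤ (((β b + β c) - bigM μhat b c : ℝ) : EReal) := by
    unfold pGapSub
    apply iSup₂_le
    intro j hj
    rw [EReal.coe_le_coe_iff]
    have hjb : j ≠ b := fun h => hbO (h ▸ hj)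
    have hjFG : j ∈ (Fhat ∪ G) \ {b} := ⟨hOsub j hj, hjb⟩
    have hc2j := hc2 j hjFG
    rw [hMhatm, hMhatm] at hc2j
    have := hsm b j
    linarith
  -- lower bound on bigM μhat b c
  have hmb : -(β b + β c) ≤ bigM μhat b c := by
    rcases lt_or_ge Z2 0 with hZ2n | hZ2n
    · obtain ⟨hbO', hTb⟩ := hb1 hZ2n
      have hξb : ξ b < 0 := by
        obtain ⟨h1, h2⟩ := hT b
        by_cases hbF : b ∈ Fhat
        · rw [← h1 hbF, hTb]; exact hZ2n
        · have hh := h2 hbF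
          have hle : ξ b ≤ T b := by rw [hh]; exact le_max_right _ _
          calc ξ b ≤ T b := hle
            _ < 0 := by rw [hTb]; exact hZ2n
      have hless : ((mhatm b c : ℝ) : EReal) ≤ ξ b := by
        rw [hξ b]
        exact le_iSup₂_of_le c hc1 le_rfl
      have hlt0 : ((mhatm b c : ℝ) : EReal) < ((0:ℝ) : EReal) := by
        rw [EReal.coe_zero]
        exact lt_of_le_of_lt hless hξb
      have hm0 : mhatm b c < 0 := EReal.coe_lt_coe_iff.mp hlt0
      rw [hmhatm] at hm0
      linarith
    · have hbOh : b ∈ Ohat := by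
        rcases le_or_gt Z1F Z1PS with h | h
        · exact (hb2 hZ2n h).1
        · exact (hb3 hZ2n h).1
      rw [hOhat] at hbOh
      have hnd : ¬ Pdom (μhat b) (μhat c) := hbOh.2 c hcFhat
      rw [Pdom, not_and_or] at hnd
      have hβnn : (0:ℝ) ≤ β b + β c := by linarith [hβpos b, hβpos c]
      rcases hnd with hnd | hnd
      · push_neg at hnd
        obtain ⟨x, hx⟩ := hnd
        have hxle : μhat b x - μhat c x ≤ bigM μhat b c :=
          le_ciSup (f := fun y => μhat b y - μhat c y)
            (Set.Finite.bddAbove (Set.finite_range _)) x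
        linarith
      · push_neg at hnd
        have hz : ∀ x, μhat b x - μhat c x = 0 := fun x => by rw [hnd]; ring
        have : bigM μhat b c = 0 := by
          unfold bigM
          simp only [hz]
          exact ciSup_const
        linarith
  -- bound on the gap of c
  have hΔc_le : pGap P μ S c ≤ ((2 * (β b + β c) : ℝ) : EReal) := by
    unfold pGap
    rw [if_pos hcO]
    refine le_trans (min_le_right _ _) (le_trans (iInf₂_le b hbS) ?_)
    have h1 : ((max (bigM μ b c) 0 : ℝ) : EReal)
        ≤ ((bigM μhat b c + (β b + β c) : ℝ) : EReal) := by
      rw [EReal.coe_le_coe_iff]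
      refine max_le ?_ ?_
      · linarith [hbigM_ub b c]
      · linarith
    calc ((max (bigM μ b c) 0 : ℝ) : EReal) + pGapSub P μ b
        ≤ ((bigM μhat b c + (β b + β c) : ℝ) : EReal)
          + (((β b + β c) - bigM μhat b c : ℝ) : EReal) := add_le_add h1 hGapSub_b
      _ = ((2 * (β b + β c) : ℝ) : EReal) := by rw [← EReal.coe_add]; congr 1; ring
  -- conclude
  have hpb : pGap P μ S b = pGapSub P μ b := by unfold pGap; rw [if_neg hbO]
  rw [hpb] at hΔb
  have hbb : (4 * β b : ℝ) < (β b + β c) - bigM μhat b c :=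
    EReal.coe_lt_coe_iff.mp (lt_of_lt_of_le hΔb hGapSub_b)
  have hcc : (4 * β c : ℝ) < 2 * (β b + β c) :=
    EReal.coe_lt_coe_iff.mp (lt_of_lt_of_le hΔc hΔc_le)
  linarith
end
end

section
/- For every valid answer (S,I) ∈ M(P,μ), {b, c} ∩ W(S,I) ≠ ∅; that is, if the algorithm has not stopped and the strict confidence event holds, then for every valid answer at least one of the leader b and the challenger c is under-explored. -/
noncomputable section
open scoped Classical
open Metric Set

/-!
On the confidence event every empirical separation `M̂(i,j)` is within `βᵢ + βⱼ` of `M(i,j)`, and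
an arm of `F̂ ∪ G` that is truly infeasible has `η < 2U`. Whichever rule chose the leader `b`, one
gets `m̂⁻(b,c) < 0`, and `M̂⁻(b,c) < 0` when `b ∈ O*` with `η_b > 2U_b`. When `Z₂ ≥ 0` the first
bound holds because `b ∈ Ô`: every arm of `G` is strictly dominated by another arm of `F̂ ∪ G`, so a
maximal arm of `F̂ ∪ G` strictly dominating `b` would be feasible. Since `c` minimises `M̂⁻(b,·)` over
a set containing `O* ∖ {b}`, `M(b,c)` and all `M(b,j)`, `j ∈ O*`, are then confined to windows of
width `2(β_b + β_c)`, which is incompatible with gaps `Δ_b > 4β_b` and `Δ_c > 4β_c` in each of the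
four cases `b, c ∈ O* ∪ S`.
-/

lemma exists_biSup_eq {ι α : Type*} [Finite ι] [CompleteLinearOrder α] {s : Set ι}
    (hs : s.Nonempty) (f : ι → α) : ∃ k ∈ s, ⨆ j ∈ s, f j = f k := by
  obtain ⟨k, hk, hkeq⟩ := (LinearOrder.supClosed _).biSup_mem_of_nonempty s.toFinite hs
    fun i hi => mem_image_of_mem f hi
  exact ⟨k, hk, hkeq.symm⟩

section Separation

variable {K d : ℕ}

lemma sub_le_bigM (μ : Fin K → Evec d) (i j : Fin K) (α : Fin d) :
    μ i α - μ j α ≤ bigM μ i j :=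
  le_ciSup (f := fun α => μ i α - μ j α) (finite_range _).bddAbove α

lemma exists_bigM_eq (hd : 0 < d) (μ : Fin K → Evec d) (i j : Fin K) :
    ∃ α, bigM μ i j = μ i α - μ j α := by
  have : Nonempty (Fin d) := ⟨⟨0, hd⟩⟩
  obtain ⟨α, hα⟩ := exists_eq_ciSup_of_finite (f := fun α => μ i α - μ j α)
  exact ⟨α, hα.symm⟩

lemma bigM_le (hd : 0 < d) {μ : Fin K → Evec d} {i j : Fin K} {r : ℝ}
    (h : ∀ α, μ i α - μ j α ≤ r) : bigM μ i j ≤ r := by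
  obtain ⟨α, hα⟩ := exists_bigM_eq hd μ i j
  exact hα ▸ h α

lemma smallm_eq_neg_bigM (hd : 0 < d) (μ : Fin K → Evec d) (i j : Fin K) :
    smallm μ i j = -bigM μ i j := by
  have : Nonempty (Fin d) := ⟨⟨0, hd⟩⟩
  obtain ⟨α, hα⟩ := exists_bigM_eq hd μ i j
  refine le_antisymm ?_ (le_ciInf fun α' => by linarith [sub_le_bigM μ i j α'])
  exact (ciInf_le (finite_range _).bddBelow α).trans (by rw [hα]; linarith)

lemma bigM_le_bigM_add_bigM (hd : 0 < d) (μ : Fin K → Evec d) (i j k : Fin K) :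
    bigM μ i k ≤ bigM μ i j + bigM μ j k :=
  bigM_le hd fun α => by linarith [sub_le_bigM μ i j α, sub_le_bigM μ j k α]

lemma neg_bigM_le_bigM (hd : 0 < d) (μ : Fin K → Evec d) (i j : Fin K) :
    -bigM μ j i ≤ bigM μ i j := by
  have hii : 0 ≤ bigM μ i i := by simpa using sub_le_bigM μ i i ⟨0, hd⟩
  linarith [bigM_le_bigM_add_bigM hd μ i j i]

lemma smallm_add_smallm_le (hd : 0 < d) (μ : Fin K → Evec d) (i j k : Fin K) :
    smallm μ i j + smallm μ j k ≤ smallm μ i k := by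
  simp only [smallm_eq_neg_bigM hd]
  linarith [bigM_le_bigM_add_bigM hd μ i j k]

lemma bigM_nonpos_of_pdom (hd : 0 < d) {μ : Fin K → Evec d} {i j : Fin K}
    (h : Pdom (μ i) (μ j)) : bigM μ i j ≤ 0 :=
  bigM_le hd fun α => by linarith [h.1 α]

lemma pdom_of_smallm_pos (hd : 0 < d) {μ : Fin K → Evec d} {i j : Fin K}
    (h : 0 < smallm μ i j) : Pdom (μ i) (μ j) := by
  have hlt : ∀ α, μ i α < μ j α := fun α => by
    linarith [sub_le_bigM μ i j α, smallm_eq_neg_bigM hd μ i j]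
  exact ⟨fun α => (hlt α).le, fun he => (hlt ⟨0, hd⟩).ne (by rw [he])⟩

lemma bigM_lt_bigM_add (hd : 0 < d) {x y : Fin K → Evec d} {β : Fin K → ℝ}
    (h : ∀ i α, |x i α - y i α| < β i) (i j : Fin K) :
    bigM x i j < bigM y i j + (β i + β j) := by
  obtain ⟨α, hα⟩ := exists_bigM_eq hd x i j
  have hi := abs_lt.1 (h i α)
  have hj := abs_lt.1 (h j α)
  linarith [sub_le_bigM y i j α]

end Separation

section Margin

variable {d : ℕ} {P : Set (Evec d)} {x y : Evec d}

lemma etaD_nonneg : 0 ≤ etaD P x := by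
  unfold etaD
  split <;> exact infDist_nonneg

lemma etaD_le_etaD_add_dist (h : x ∈ P ↔ y ∈ P) : etaD P x ≤ etaD P y + dist x y := by
  unfold etaD
  by_cases hx : x ∈ P
  · rw [if_pos hx, if_pos (h.1 hx)]
    exact infDist_le_infDist_add_dist
  · rw [if_neg hx, if_neg (mt h.2 hx)]
    exact infDist_le_infDist_add_dist

lemma etaD_le_dist (h : ¬(x ∈ P ↔ y ∈ P)) : etaD P x ≤ dist x y := by
  unfold etaD
  by_cases hx : x ∈ P
  · rw [if_pos hx]
    exact infDist_le_dist_of_mem fun hy => h (iff_of_true hx hy)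
  · rw [if_neg hx]
    exact infDist_le_dist_of_mem (by_contra fun hy => h (iff_of_false hx hy))

lemma mem_or_etaD_lt (hx : x ∈ P) {u : ℝ} (hxy : dist x y < u) : y ∈ P ∨ etaD P y < u := by
  by_cases hy : y ∈ P
  · exact Or.inl hy
  · exact Or.inr ((etaD_le_dist fun h => hy (h.2 hx)).trans_lt (by rwa [dist_comm]))

lemma etaD_lt_two_mul {u : ℝ} (hxy : dist x y < u) (hy : (x ∈ P ↔ y ∈ P) → etaD P y < u) :
    etaD P x < 2 * u := by
  by_cases h : x ∈ P ↔ y ∈ P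
  · linarith [etaD_le_etaD_add_dist h, hy h]
  · linarith [etaD_le_dist h, dist_nonneg.trans_lt hxy]

end Margin

lemma mul_sq_div_sub_neg_iff {N σ η g : ℝ} (hN : 0 < N) (hσ : 0 < σ) (hη : 0 ≤ η) :
    N * η ^ 2 / (2 * σ ^ 2) - g < 0 ↔ η < σ * √(2 * g / N) := by
  rw [sub_neg, ← div_lt_iff₀' hσ, Real.lt_sqrt (div_nonneg hη hσ.le), div_lt_iff₀ (by positivity),
    lt_div_iff₀ hN]
  constructor <;> intro h <;> field_simp at * <;> linarith

section Gaps

variable {K d : ℕ} {P : Set (Evec d)} {μ : Fin K → Evec d} {S : Set (Fin K)}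

lemma pGap_of_not_mem_optSet {i : Fin K} (hi : i ∉ OptSet P μ) : pGap P μ S i = pGapSub P μ i :=
  if_neg hi

lemma lt_bigM_of_lt_pGap {i j : Fin K} {r : ℝ} (hi : i ∈ OptSet P μ)
    (h : (r : EReal) < pGap P μ S i) (hj : j ∈ OptSet P μ) (hji : j ≠ i) :
    r < bigM μ i j ∧ r < bigM μ j i := by
  rw [pGap, if_pos hi] at h
  exact lt_min_iff.1 (EReal.coe_lt_coe_iff.1 ((lt_min_iff.1 h).1.trans_le (biInf_le _ ⟨hj, hji⟩)))

lemma lt_max_bigM_add_pGapSub {i j : Fin K} {r : ℝ} (hi : i ∈ OptSet P μ)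
    (h : (r : EReal) < pGap P μ S i) (hj : j ∈ S) :
    (r : EReal) < ((max (bigM μ j i) 0 : ℝ) : EReal) + pGapSub P μ j := by
  rw [pGap, if_pos hi] at h
  exact (lt_min_iff.1 h).2.trans_le (biInf_le _ hj)

lemma exists_pGapSub_eq {i : Fin K} {r : ℝ} (h : (r : EReal) < pGapSub P μ i) :
    ∃ k ∈ OptSet P μ, r < smallm μ i k ∧ pGapSub P μ i = smallm μ i k := by
  obtain ⟨j, hj, -⟩ := lt_biSup_iff.1 h
  obtain ⟨k, hk, hkeq⟩ := exists_biSup_eq ⟨j, hj⟩ fun j => ((smallm μ i j : ℝ) : EReal)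
  rw [pGapSub, hkeq] at h ⊢
  exact ⟨k, hk, EReal.coe_lt_coe_iff.1 h, rfl⟩

lemma pGap_le_or_pGap_le_of_mem_optSet (hd : 0 < d) {β : Fin K → ℝ} {b c : Fin K}
    (hβ : ∀ i, 0 < β i) (hS : ∀ i ∈ S, i ∉ OptSet P μ) (hb : b ∈ OptSet P μ)
    (hc : c ∈ OptSet P μ ∪ S) (hcb : c ≠ b) (hbc : bigM μ b c < 2 * (β b + β c)) :
    pGap P μ S b ≤ ((4 * β b : ℝ) : EReal) ∨ pGap P μ S c ≤ ((4 * β c : ℝ) : EReal) := by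
  by_contra! h
  obtain ⟨hΔb, hΔc⟩ := h
  rcases hc with hc | hc
  · linarith [(lt_bigM_of_lt_pGap hb hΔb hc hcb).1, (lt_bigM_of_lt_pGap hc hΔc hb hcb.symm).2]
  rw [pGap_of_not_mem_optSet (hS c hc)] at hΔc
  obtain ⟨k, hk, hck, hΔc⟩ := exists_pGapSub_eq hΔc
  rw [smallm_eq_neg_bigM hd] at hck hΔc
  by_cases hkb : k = b
  · subst hkb
    have h := lt_max_bigM_add_pGapSub hb hΔb hc
    rw [hΔc, ← EReal.coe_add, EReal.coe_lt_coe_iff, max_eq_right (by linarith [hβ c])] at h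
    linarith [neg_bigM_le_bigM hd μ k c]
  · linarith [(lt_bigM_of_lt_pGap hb hΔb hk hkb).1, bigM_le_bigM_add_bigM hd μ b c k, hβ b, hβ c]

lemma pGap_le_or_pGap_le_of_mem_subOpt (hd : 0 < d) {β : Fin K → ℝ} {b c : Fin K}
    (hS : ∀ i ∈ S, i ∉ OptSet P μ) (hb : b ∈ S) (hc : c ∈ OptSet P μ ∪ S)
    (hchal : ∀ j ∈ OptSet P μ, bigM μ b c < bigM μ b j + 2 * (β b + β c))
    (hlow : ∀ j ∈ OptSet P μ, -bigM μ b j < 2 * (β b + β c)) :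
    pGap P μ S b ≤ ((4 * β b : ℝ) : EReal) ∨ pGap P μ S c ≤ ((4 * β c : ℝ) : EReal) := by
  by_contra! h
  obtain ⟨hΔb, hΔc⟩ := h
  rw [pGap_of_not_mem_optSet (hS b hb)] at hΔb
  obtain ⟨k, hk, hbk, hΔb⟩ := exists_pGapSub_eq hΔb
  rw [smallm_eq_neg_bigM hd] at hbk hΔb
  have hβbc : β b < β c := by linarith [hlow k hk]
  rcases hc with hc | hc
  · have h := lt_max_bigM_add_pGapSub hc hΔc hb
    rw [hΔb, ← EReal.coe_add, EReal.coe_lt_coe_iff] at h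
    rcases max_cases (bigM μ b c) 0 with ⟨hmax, -⟩ | ⟨hmax, -⟩ <;> rw [hmax] at h
    · linarith [hchal k hk]
    · linarith [hlow k hk]
  · rw [pGap_of_not_mem_optSet (hS c hc)] at hΔc
    obtain ⟨j, hj, hcj, -⟩ := exists_pGapSub_eq hΔc
    rw [smallm_eq_neg_bigM hd] at hcj
    linarith [hchal j hj, bigM_le_bigM_add_bigM hd μ b c j]

lemma mem_Wunder_or_mem_Wunder (hd : 0 < d) {I : Set (Fin K)} {β U : Fin K → ℝ} {b c : Fin K}
    (hSI : ValidAnswer P μ S I)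
    (hβ : ∀ i, 0 < β i) (hcb : c ≠ b)
    (hbη : μ b ∉ P → etaD P (μ b) < 2 * U b) (hcη : μ c ∉ P → etaD P (μ c) < 2 * U c)
    (hopt : b ∈ OptSet P μ → 2 * U b < etaD P (μ b) → bigM μ b c < 2 * (β b + β c))
    (hchal : ∀ j ∈ OptSet P μ, j ≠ b → bigM μ b c < bigM μ b j + 2 * (β b + β c))
    (hlow : ∀ j ∈ OptSet P μ, j ≠ b → -bigM μ b j < 2 * (β b + β c)) :
    b ∈ Wunder P μ S I β U ∨ c ∈ Wunder P μ S I β U := by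
  obtain ⟨-, hIF, -, hSI⟩ := hSI
  have hS : ∀ i ∈ S, i ∉ OptSet P μ := fun i hi => hSI.le (Or.inl hi)
  have hcover : ∀ i, i ∉ I → i ∈ OptSet P μ ∪ S := fun i hiI =>
    (em (i ∈ OptSet P μ)).imp id fun hO => (hSI.ge hO).resolve_right hiI
  by_contra! h
  simp only [Wunder, mem_union, mem_ofPred_eq, not_or, not_and, not_le] at h
  obtain ⟨⟨⟨hbO, hbI⟩, hbS⟩, ⟨hcO, hcI⟩, hcS⟩ := h
  have hbOS := hcover b fun hI => lt_asymm (hbI hI) (hbη (hIF hI))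
  have hcOS := hcover c fun hI => lt_asymm (hcI hI) (hcη (hIF hI))
  have hΔb : ((4 * β b : ℝ) : EReal) < pGap P μ S b := hbOS.elim (fun h => (hbO h).1) hbS
  have hΔc : ((4 * β c : ℝ) : EReal) < pGap P μ S c := hcOS.elim (fun h => (hcO h).1) hcS
  rcases hbOS with hb | hb
  · rcases pGap_le_or_pGap_le_of_mem_optSet hd hβ hS hb hcOS hcb (hopt hb (hbO hb).2) with h | h
    exacts [h.not_gt hΔb, h.not_gt hΔc]
  · have hbO' := hS b hb
    rcases pGap_le_or_pGap_le_of_mem_subOpt hd hS hb hcOS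
      (fun j hj => hchal j hj (ne_of_mem_of_not_mem hj hbO'))
      (fun j hj => hlow j hj (ne_of_mem_of_not_mem hj hbO')) with h | h
    exacts [h.not_gt hΔb, h.not_gt hΔc]

end Gaps

lemma smallm_nonpos_of_mem_optSet {K d : ℕ} (hd : 0 < d) {P : Set (Evec d)}
    {ν : Fin K → Evec d} {s : Set (Fin K)} {b : Fin K} (hb : b ∈ OptSet P ν)
    (hs : ∀ x ∈ s, ν x ∉ P → ∃ k ∈ s, 0 < smallm ν x k) {x : Fin K} (hx : x ∈ s) :
    smallm ν b x ≤ 0 := by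
  by_contra! hbx
  obtain ⟨y, ⟨hy, hby⟩, hmax⟩ := Set.exists_max_image {y | y ∈ s ∧ 0 < smallm ν b y}
    (smallm ν b) (Set.toFinite _) ⟨x, hx, hbx⟩
  by_cases hyP : ν y ∈ P
  · exact hb.2 y hyP (pdom_of_smallm_pos hd hby)
  · obtain ⟨k, hk, hyk⟩ := hs y hy hyP
    have hbk := smallm_add_smallm_le hd ν b y k
    linarith [hmax k ⟨hk, by linarith⟩]

section Leader

variable {K d : ℕ} {P : Set (Evec d)} {μ μhat : Fin K → Evec d} {β U γ : Fin K → ℝ}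
  {Fhat Ohat G : Set (Fin K)} {Mhatm mhatm : Fin K → Fin K → ℝ} {ξ T : Fin K → EReal}
  {b c : Fin K}

lemma leader_spec_of_Z2_neg (hd : 0 < d) (hβ : ∀ i, 0 < β i)
    (hdist : dist (μ b) (μhat b) < U b)
    (hFhat : Fhat = FeasSet P μhat) (hOhat : Ohat = OptSet P μhat)
    (hG : G = {i | i ∉ Fhat ∧ γ i < 0})
    (hMhatm : ∀ i j, Mhatm i j = bigM μhat i j - (β i + β j))
    (hξ : ξ b = ⨆ j ∈ (Fhat ∪ G) \ {b}, ((mhatm b j : ℝ) : EReal))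
    (hT : (b ∈ Fhat → T b = ξ b) ∧ (b ∉ Fhat → T b = max ((γ b : ℝ) : EReal) (ξ b)))
    (hbO : b ∉ Ohat) (hTb : T b < 0) (hc1 : c ∈ (Fhat ∪ G) \ {b})
    (hc2 : ∀ j ∈ (Fhat ∪ G) \ {b}, Mhatm b c ≤ Mhatm b j) :
    b ∈ Fhat ∪ G ∧ mhatm b c < 0 ∧
      (b ∈ OptSet P μ → 2 * U b < etaD P (μ b) → Mhatm b c < 0) := by
  have hξb : ξ b < 0 := by
    by_cases hbF : b ∈ Fhat
    · rwa [← hT.1 hbF]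
    · exact (le_max_right _ _).trans_lt (hT.2 hbF ▸ hTb)
  refine ⟨?_, ?_, fun hbopt hη => ?_⟩
  · by_cases hbF : b ∈ Fhat
    · exact Or.inl hbF
    · have hγb := (le_max_left _ _).trans_lt (hT.2 hbF ▸ hTb)
      exact Or.inr (hG ▸ ⟨hbF, by exact_mod_cast hγb⟩)
  · have := (le_biSup (fun j => ((mhatm b j : ℝ) : EReal)) hc1).trans_lt (hξ ▸ hξb)
    exact_mod_cast this
  · have hbP : μhat b ∈ P := by
      by_contra h
      exact lt_asymm hη (etaD_lt_two_mul hdist fun hiff => absurd (hiff.1 hbopt.1) h)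
    obtain ⟨j, hjP, hdom⟩ : ∃ j, μhat j ∈ P ∧ Pdom (μhat b) (μhat j) := by
      by_contra! h
      exact hbO (hOhat ▸ ⟨hbP, h⟩)
    have hjb : j ≠ b := fun h => hdom.2 (h ▸ rfl)
    linarith [hc2 j ⟨Or.inl (hFhat ▸ hjP), hjb⟩, hMhatm b j, bigM_nonpos_of_pdom hd hdom, hβ b, hβ j]

lemma exists_smallm_pos_of_T_nonneg (hβ : ∀ i, 0 < β i) {x : Fin K}
    (hFhat : Fhat = FeasSet P μhat) (hOhat : Ohat = OptSet P μhat)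
    (hG : G = {i | i ∉ Fhat ∧ γ i < 0})
    (hmhatm : ∀ i j, mhatm i j = smallm μhat i j - (β i + β j))
    (hξ : ξ x = ⨆ j ∈ (Fhat ∪ G) \ {x}, ((mhatm x j : ℝ) : EReal))
    (hT : x ∉ Fhat → T x = max ((γ x : ℝ) : EReal) (ξ x)) (hTnn : x ∉ Ohat → 0 ≤ T x)
    (hx : x ∈ Fhat ∪ G) (hxP : μhat x ∉ P) :
    ∃ k ∈ Fhat ∪ G, 0 < smallm μhat x k := by
  have hxF : x ∉ Fhat := hFhat ▸ hxP
  have hγx : ((γ x : ℝ) : EReal) < 0 := by exact_mod_cast (hG ▸ hx.resolve_left hxF).2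
  have hTx := hTnn fun h => hxF (hFhat ▸ (hOhat ▸ h).1)
  rw [hT hxF, le_max_iff, or_iff_right hγx.not_ge, hξ] at hTx
  have hne : ((Fhat ∪ G) \ {x}).Nonempty :=
    Set.nonempty_iff_ne_empty.2 fun h => by simp [h] at hTx
  obtain ⟨k, hk, hkeq⟩ := exists_biSup_eq hne fun j => ((mhatm x j : ℝ) : EReal)
  rw [hkeq] at hTx
  have hxk : 0 ≤ mhatm x k := by exact_mod_cast hTx
  exact ⟨k, hk.1, by linarith [hmhatm x k, hβ x, hβ k]⟩

lemma leader_spec_of_Z2_nonneg (hd : 0 < d) (hβ : ∀ i, 0 < β i)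
    (hdist : dist (μ b) (μhat b) < U b) (hγb : γ b < 0 ↔ etaD P (μhat b) < U b)
    (hFhat : Fhat = FeasSet P μhat) (hOhat : Ohat = OptSet P μhat)
    (hG : G = {i | i ∉ Fhat ∧ γ i < 0})
    (hmhatm : ∀ i j, mhatm i j = smallm μhat i j - (β i + β j))
    (hξ : ∀ i, ξ i = ⨆ j ∈ (Fhat ∪ G) \ {i}, ((mhatm i j : ℝ) : EReal))
    (hT : ∀ i, (i ∈ Fhat → T i = ξ i) ∧ (i ∉ Fhat → T i = max ((γ i : ℝ) : EReal) (ξ i)))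
    {Z1F Z1PS Z1 Z2 : EReal} (hZ1 : Z1 = min Z1F Z1PS) (hZ2 : Z2 = ⨅ i ∈ Ohatᶜ, T i)
    (hZ1neg : Z1 < 0) (hZ2nn : 0 ≤ Z2)
    (hb2 : Z1F ≤ Z1PS → b ∈ Ohat ∧ ((γ b : ℝ) : EReal) = Z1F)
    (hb3 : Z1PS < Z1F → b ∈ Ohat ∧ (⨅ j ∈ Ohat \ {b}, ((Mhatm b j : ℝ) : EReal)) = Z1PS)
    (hc1 : c ∈ (Fhat ∪ G) \ {b}) (hc2 : ∀ j ∈ (Fhat ∪ G) \ {b}, Mhatm b c ≤ Mhatm b j) :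
    b ∈ Fhat ∪ G ∧ mhatm b c < 0 ∧
      (b ∈ OptSet P μ → 2 * U b < etaD P (μ b) → Mhatm b c < 0) := by
  obtain ⟨hbO, hZ1b⟩ : b ∈ Ohat ∧ (((γ b : ℝ) : EReal) < 0 ∨
      ⨅ j ∈ Ohat \ {b}, ((Mhatm b j : ℝ) : EReal) < 0) := by
    rcases le_or_gt Z1F Z1PS with h | h
    · obtain ⟨hbO, hγb⟩ := hb2 h
      exact ⟨hbO, Or.inl (hγb ▸ min_eq_left h ▸ hZ1 ▸ hZ1neg)⟩
    · obtain ⟨hbO, hinf⟩ := hb3 h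
      exact ⟨hbO, Or.inr (hinf ▸ min_eq_right h.le ▸ hZ1 ▸ hZ1neg)⟩
  have hTnn : ∀ i ∉ Ohat, 0 ≤ T i := fun i hi => hZ2nn.trans (hZ2 ▸ biInf_le T hi)
  have hbP : μhat b ∈ P := (hOhat ▸ hbO).1
  refine ⟨Or.inl (hFhat ▸ hbP), ?_, fun hbopt hη => ?_⟩
  · have hbc := smallm_nonpos_of_mem_optSet hd (hOhat ▸ hbO) (fun x hx hxP =>
      exists_smallm_pos_of_T_nonneg hβ hFhat hOhat hG hmhatm (hξ x) (hT x).2 (hTnn x) hx hxP) hc1.1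
    linarith [hmhatm b c, hβ b, hβ c]
  rcases hZ1b with h | h
  · have hηhat := hγb.1 (by exact_mod_cast h)
    exact absurd hη (etaD_lt_two_mul hdist fun _ => hηhat).not_gt
  · obtain ⟨j, ⟨hjO, hjb⟩, hj⟩ := lt_biInf_iff.1 h
    have hj' : Mhatm b j < 0 := by exact_mod_cast hj
    exact (hc2 j ⟨Or.inl (hFhat ▸ (hOhat ▸ hjO).1), hjb⟩).trans_lt hj'

lemma mem_Wunder_or_mem_Wunder_of_leader_spec (hd : 0 < d) {S I C : Set (Fin K)}
    (hSI : ValidAnswer P μ S I) (hβ : ∀ i, 0 < β i) (hconf : ∀ i α, |μhat i α - μ i α| < β i)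
    (hdist : ∀ i, dist (μ i) (μhat i) < U i)
    (hC : ∀ i, i ∈ C ↔ μhat i ∈ P ∨ etaD P (μhat i) < U i)
    (hMhatm : ∀ i j, Mhatm i j = bigM μhat i j - (β i + β j))
    (hmhatm : ∀ i j, mhatm i j = smallm μhat i j - (β i + β j))
    (hc1 : c ∈ C \ {b}) (hc2 : ∀ j ∈ C \ {b}, Mhatm b c ≤ Mhatm b j)
    (hbC : b ∈ C) (hbc : mhatm b c < 0)
    (hbopt : b ∈ OptSet P μ → 2 * U b < etaD P (μ b) → Mhatm b c < 0) :
    b ∈ Wunder P μ S I β U ∨ c ∈ Wunder P μ S I β U := by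
  have hη : ∀ i ∈ C, μ i ∉ P → etaD P (μ i) < 2 * U i := fun i hi hμ =>
    etaD_lt_two_mul (hdist i) fun hiff => ((hC i).1 hi).resolve_left (mt hiff.2 hμ)
  have hOptC : ∀ j ∈ OptSet P μ, j ≠ b → j ∈ C \ {b} := fun j hj hjb =>
    ⟨(hC j).2 (mem_or_etaD_lt hj.1 (hdist j)), hjb⟩
  have hchal : ∀ j ∈ C \ {b}, Mhatm b c < bigM μ b j := fun j hj => by
    linarith [hc2 j hj, hMhatm b j, bigM_lt_bigM_add hd hconf b j]
  have hup : bigM μ b c - 2 * (β b + β c) < Mhatm b c := by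
    have hconf' : ∀ i α, |μ i α - μhat i α| < β i := fun i α => abs_sub_comm (μ i α) _ ▸ hconf i α
    linarith [hMhatm b c, bigM_lt_bigM_add hd hconf' b c]
  have hlow : -2 * (β b + β c) < Mhatm b c := by
    linarith [hMhatm b c, hmhatm b c, smallm_eq_neg_bigM hd μhat b c]
  refine mem_Wunder_or_mem_Wunder hd hSI hβ hc1.2 (hη b hbC) (hη c hc1.1)
    (fun hb hηb => ?_) (fun j hj hjb => ?_) (fun j hj hjb => ?_)
  · linarith [hbopt hb hηb]
  · linarith [hchal j (hOptC j hj hjb)]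
  · linarith [hchal j (hOptC j hj hjb)]

end Leader

theorem stmt13_general {K d : ℕ} (hd : 0 < d)
    (P : Set (Evec d))
    (μ μhat : Fin K → Evec d)
    (N : Fin K → ℕ) (hN : ∀ i, 1 ≤ N i)
    (σu g : ℝ) (hσu : 0 < σu)
    (β U : Fin K → ℝ)
    (hU : ∀ i, U i = σu * Real.sqrt (2 * g / (N i : ℝ)))
    (hconf1 : ∀ i, ∀ c, |μhat i c - μ i c| < β i)
    (hconf2 : ∀ i, ‖μhat i - μ i‖ < U i)
    (Fhat Ohat G : Set (Fin K)) (ηhat γ : Fin K → ℝ)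
    (hFhat : Fhat = FeasSet P μhat)
    (hOhat : Ohat = OptSet P μhat)
    (hηhat : ∀ i, ηhat i = etaD P (μhat i))
    (hγ : ∀ i, γ i = (N i : ℝ) * (ηhat i) ^ 2 / (2 * σu ^ 2) - g)
    (hG : G = {i | i ∉ Fhat ∧ γ i < 0})
    (Mhatm mhatm : Fin K → Fin K → ℝ)
    (hMhatm : ∀ i j, Mhatm i j = bigM μhat i j - (β i + β j))
    (hmhatm : ∀ i j, mhatm i j = smallm μhat i j - (β i + β j))
    (ξ T : Fin K → EReal)
    (hξ : ∀ i, ξ i = ⨆ j ∈ (Fhat ∪ G) \ {i}, ((mhatm i j : ℝ) : EReal))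
    (hT : ∀ i, (i ∈ Fhat → T i = ξ i) ∧ (i ∉ Fhat → T i = max ((γ i : ℝ) : EReal) (ξ i)))
    (Z1F Z1PS Z1 Z2 : EReal)
    (hZ1 : Z1 = min Z1F Z1PS)
    (hZ2 : Z2 = ⨅ i ∈ Ohatᶜ, T i)
    (hnotstop : Z1 < 0 ∨ Z2 < 0)
    (b c : Fin K)
    (hb1 : Z2 < 0 → b ∉ Ohat ∧ T b = Z2)
    (hb2 : 0 ≤ Z2 → Z1F ≤ Z1PS → b ∈ Ohat ∧ ((γ b : ℝ) : EReal) = Z1F)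
    (hb3 : 0 ≤ Z2 → Z1PS < Z1F → b ∈ Ohat ∧
      (⨅ j ∈ Ohat \ {b}, ((Mhatm b j : ℝ) : EReal)) = Z1PS)
    (hc1 : c ∈ (Fhat ∪ G) \ {b})
    (hc2 : ∀ j ∈ (Fhat ∪ G) \ {b}, Mhatm b c ≤ Mhatm b j)
    :
    ∀ S I : Set (Fin K), ValidAnswer P μ S I →
      b ∈ Wunder P μ S I β U ∨ c ∈ Wunder P μ S I β U := by
  intro S I hSI
  have hβ : ∀ i, 0 < β i := fun i => (abs_nonneg _).trans_lt (hconf1 i ⟨0, hd⟩)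
  have hdist : ∀ i, dist (μ i) (μhat i) < U i := fun i => (dist_eq_norm' _ _).trans_lt (hconf2 i)
  have hγneg : ∀ i, γ i < 0 ↔ etaD P (μhat i) < U i := fun i => by
    rw [hγ, hηhat, hU]
    exact mul_sq_div_sub_neg_iff (by exact_mod_cast hN i) hσu etaD_nonneg
  have hC : ∀ i, i ∈ Fhat ∪ G ↔ μhat i ∈ P ∨ etaD P (μhat i) < U i := fun i => by
    subst hFhat hG
    simp only [mem_union, mem_ofPred_eq, FeasSet, hγneg]
    tauto
  obtain ⟨hbC, hbc, hbopt⟩ : b ∈ Fhat ∪ G ∧ mhatm b c < 0 ∧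
      (b ∈ OptSet P μ → 2 * U b < etaD P (μ b) → Mhatm b c < 0) := by
    rcases lt_or_ge Z2 0 with hZ2neg | hZ2nn
    · obtain ⟨hbO, hTb⟩ := hb1 hZ2neg
      exact leader_spec_of_Z2_neg hd hβ (hdist b) hFhat hOhat hG hMhatm (hξ b) (hT b) hbO
        (hTb ▸ hZ2neg) hc1 hc2
    · exact leader_spec_of_Z2_nonneg hd hβ (hdist b) (hγneg b) hFhat hOhat hG hmhatm hξ hT hZ1
        hZ2 (hnotstop.resolve_right hZ2nn.not_gt) hZ2nn (hb2 hZ2nn) (hb3 hZ2nn) hc1 hc2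
  exact mem_Wunder_or_mem_Wunder_of_leader_spec hd hSI hβ hconf1 hdist hC hMhatm hmhatm hc1 hc2
    hbC hbc hbopt

/-- if the algorithm has not stopped and the strict confidence event
holds, then for every valid answer `(S, I)` at least one of the leader `b` and the
challenger `c` is under-explored. -/
theorem stmt13 {K d m : ℕ} (hK : 0 < K) (hd : 0 < d) (hm : 0 < m)
    (A : Fin m → Fin d → ℝ) (bvec : Fin m → ℝ)
    (P : Set (Evec d)) (hPdef : P = PolySet A bvec)
    (μ μhat : Fin K → Evec d)
    (N : Fin K → ℕ) (hN : ∀ i, 1 ≤ N i)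
    (σ σu f g : ℝ) (hσ : 0 < σ) (hσu : 0 < σu) (hf : 0 < f) (hg : 0 < g)
    (β U : Fin K → ℝ)
    (hβ : ∀ i, β i = σ * Real.sqrt (2 * f / (N i : ℝ)))
    (hU : ∀ i, U i = σu * Real.sqrt (2 * g / (N i : ℝ)))
    (hconf1 : ∀ i, ∀ c, |μhat i c - μ i c| < β i)
    (hconf2 : ∀ i, ‖μhat i - μ i‖ < U i)
    (Fhat Ohat G : Set (Fin K)) (ηhat γ : Fin K → ℝ)
    (hFhat : Fhat = FeasSet P μhat)
    (hOhat : Ohat = OptSet P μhat)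
    (hηhat : ∀ i, ηhat i = etaD P (μhat i))
    (hγ : ∀ i, γ i = (N i : ℝ) * (ηhat i) ^ 2 / (2 * σu ^ 2) - g)
    (hG : G = {i | i ∉ Fhat ∧ γ i < 0})
    (Mhatm mhatm : Fin K → Fin K → ℝ)
    (hMhatm : ∀ i j, Mhatm i j = bigM μhat i j - (β i + β j))
    (hmhatm : ∀ i j, mhatm i j = smallm μhat i j - (β i + β j))
    (ξ T : Fin K → EReal)
    (hξ : ∀ i, ξ i = ⨆ j ∈ (Fhat ∪ G) \ {i}, ((mhatm i j : ℝ) : EReal))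
    (hT : ∀ i, (i ∈ Fhat → T i = ξ i) ∧ (i ∉ Fhat → T i = max ((γ i : ℝ) : EReal) (ξ i)))
    (Z1F Z1PS Z1 Z2 : EReal)
    (hZ1F : Z1F = ⨅ i ∈ Ohat, ((γ i : ℝ) : EReal))
    (hZ1PS : Z1PS = ⨅ i ∈ Ohat, ⨅ j ∈ Ohat \ {i}, ((Mhatm i j : ℝ) : EReal))
    (hZ1 : Z1 = min Z1F Z1PS)
    (hZ2 : Z2 = ⨅ i ∈ Ohatᶜ, T i)
    (hnotstop : Z1 < 0 ∨ Z2 < 0)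
    (b c : Fin K)
    (hb1 : Z2 < 0 → b ∉ Ohat ∧ T b = Z2)
    (hb2 : 0 ≤ Z2 → Z1F ≤ Z1PS → b ∈ Ohat ∧ ((γ b : ℝ) : EReal) = Z1F)
    (hb3 : 0 ≤ Z2 → Z1PS < Z1F → b ∈ Ohat ∧
      (⨅ j ∈ Ohat \ {b}, ((Mhatm b j : ℝ) : EReal)) = Z1PS)
    (hFG : ((Fhat ∪ G) \ {b}).Nonempty)
    (hc1 : c ∈ (Fhat ∪ G) \ {b})
    (hc2 : ∀ j ∈ (Fhat ∪ G) \ {b}, Mhatm b c ≤ Mhatm b j)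
    :
    ∀ S I : Set (Fin K), ValidAnswer P μ S I →
      b ∈ Wunder P μ S I β U ∨ c ∈ Wunder P μ S I β U :=
  stmt13_general hd P μ μhat N hN σu g hσu β U hU hconf1 hconf2 Fhat Ohat G ηhat γ hFhat hOhat hηhat
    hγ hG Mhatm mhatm hMhatm hmhatm ξ T hξ hT Z1F Z1PS Z1 Z2 hZ1 hZ2 hnotstop b c hb1 hb2 hb3 hc1
    hc2
end
end

section
/- Let a, b ∈ ℝ with a ≥ e and b ≥ e. For every real t, if t ≥ 2a·log(ab), then a·log(bt) ≤ t. -/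
/-- if `a, b ≥ e` and `t ≥ 2a·log(ab)` then `a·log(bt) ≤ t`. -/
theorem stmt14 (a b : ℝ) (ha : Real.exp 1 ≤ a) (hb : Real.exp 1 ≤ b) :
    ∀ t : ℝ, 2 * a * Real.log (a * b) ≤ t → a * Real.log (b * t) ≤ t := by
  intro t ht
  have he : (0:ℝ) < Real.exp 1 := Real.exp_pos 1
  have ha0 : 0 < a := lt_of_lt_of_le he ha
  have hb0 : 0 < b := lt_of_lt_of_le he hb
  have hla : 1 ≤ Real.log a := (Real.le_log_iff_exp_le ha0).2 ha
  have hlb : 1 ≤ Real.log b := (Real.le_log_iff_exp_le hb0).2 hb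
  have hlab : Real.log (a*b) = Real.log a + Real.log b :=
    Real.log_mul (ne_of_gt ha0) (ne_of_gt hb0)
  rw [hlab] at ht
  have ht0 : 0 < t := lt_of_lt_of_le (by nlinarith) ht
  have h1 : Real.log (t / (2*a)) ≤ t/(2*a) - 1 :=
    Real.log_le_sub_one_of_pos (by positivity)
  have h2 : Real.log (t/(2*a)) = Real.log t - Real.log (2*a) :=
    Real.log_div (ne_of_gt ht0) (by positivity)
  have h3 : Real.log (2*a) = Real.log 2 + Real.log a :=
    Real.log_mul two_ne_zero (ne_of_gt ha0)
  have hlog2 : Real.log 2 ≤ 1 := by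
    have := Real.log_le_sub_one_of_pos (by norm_num : (0:ℝ) < 2)
    linarith
  have hbt : Real.log (b*t) = Real.log b + Real.log t :=
    Real.log_mul (ne_of_gt hb0) (ne_of_gt ht0)
  have hlt : Real.log t ≤ t/(2*a) - 1 + Real.log 2 + Real.log a := by
    rw [h2, h3] at h1; linarith
  rw [hbt]
  have hfrac : a * (t/(2*a)) = t/2 := by field_simp
  nlinarith [mul_le_mul_of_nonneg_left hlt ha0.le]
end
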